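/- arXiv:0812.4897 — 2 statements merged into one kernel-verified Lean document; each statement's English description precedes it below -/
import Mathlib

section
/- Let A be a Lie conformal algebra and M an A-module with a commutative associative product on which ∂^M and all a_λ (a ∈ A) act by derivations. For every basic h-chain ξ ∈ Γ̃_h(A,M), one has [∂, ι_ξ] = ∂ ∘ ι_ξ − ι_ξ ∘ ∂ = ι_{∂ξ} as operators Γ̃^k(A,M) → Γ̃^{k−h}(A,M). In particular, if ξ ∈ Γ_h(A,M) is a reduced h-chain, then ι_ξ commutes with ∂ and induces a well-defined contraction operator Γ^k(A,M) → Γ^{k−h}(A,M) on the reduced complex. -/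
namespace LCC

/-! ### Index utilities -/

/-- Skip one index: the increasing enumeration of `{0,…,k} \ {i}`. -/
def skip1 (i r : ℕ) : ℕ := if r < i then r else r + 1

/-- Skip two indices `i < j`: the increasing enumeration of `{0,…,k+1} \ {i,j}`. -/
def skip2 (i j r : ℕ) : ℕ := if r < i then r else if r + 1 < j then r + 1 else r + 2

/-- Remove the `i`-th entry of a tuple. -/
def rm1 {α : Type*} {k : ℕ} (i : ℕ) (a : Fin (k+1) → α) : Fin k → α :=
  fun r => a ⟨skip1 i r.1, by have := r.2; unfold skip1; split <;> omega⟩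

/-- Remove the `i`-th and `j`-th entries (for `i < j`) of a tuple. -/
def rm2 {α : Type*} {k : ℕ} (i j : ℕ) (a : Fin (k+2) → α) : Fin k → α :=
  fun r => a ⟨skip2 i j r.1, by
    have := r.2; unfold skip2; split
    · omega
    · split <;> omega⟩

/-- Total weight of a multi-index. -/
def wt {k : ℕ} (ν : Fin k → ℕ) : ℕ := ∑ r, ν r

/-- The multinomial coefficient `(|m| + s)! / (∏ mᵣ! · s!)`. -/
def mnom {K : ℕ} (m : Fin K → ℕ) (s : ℕ) : ℕ :=
  (wt m + s).factorial / ((∏ r, (m r).factorial) * s.factorial)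

variable (F : Type*) [Field F]

/-- A Lie conformal algebra over `F`: an `F[∂]`-module `A` (given by the linear
endomorphism `D`), together with a `λ`-bracket recorded through its coefficients:
`[a_λ b] = ∑ₙ (br a b n) λⁿ`, satisfying sesquilinearity, skew-symmetry and the
Jacobi identity (all written in terms of coefficients of the `λ`-expansions). -/
structure LCA (A : Type*) [AddCommGroup A] [Module F A] where
  D : A →ₗ[F] A
  br : A →ₗ[F] A →ₗ[F] (ℕ → A)
  br_fin : ∀ a b, (Function.support (br a b)).Finite
  sesq_left_zero : ∀ a b, br (D a) b 0 = 0
  sesq_left : ∀ a b n, br (D a) b (n+1) = - br a b n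
  sesq_right : ∀ a b n, br a (D b) n
      = D (br a b n) + (if n = 0 then 0 else br a b (n-1))
  skew : ∀ a b m, br a b m
      = - ∑ᶠ n, ((-1 : F)^n * (n.choose m : F)) • ((D ^ (n - m)) (br b a n))
  jacobi : ∀ a b c m n,
      br a (br b c n) m - br b (br a c m) n
        = ∑ j ∈ Finset.range (m+1), (((n+j).choose j : F)) • br (br a b (m-j)) c (n+j)

/-- A module over a Lie conformal algebra: an `F[∂]`-module `M` with a `λ`-action
of `A`, given through the coefficients `a_λ v = ∑ₙ (act a v n) λⁿ`, satisfying
sesquilinearity and the Jacobi identity. -/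
structure LCAMod {A : Type*} [AddCommGroup A] [Module F A] (L : LCA F A)
    (M : Type*) [AddCommGroup M] [Module F M] where
  D : M →ₗ[F] M
  act : A →ₗ[F] M →ₗ[F] (ℕ → M)
  act_fin : ∀ a m, (Function.support (act a m)).Finite
  sesq_left_zero : ∀ a m, act (L.D a) m 0 = 0
  sesq_left : ∀ a m n, act (L.D a) m (n+1) = - act a m n
  sesq_right : ∀ a m n, act a (D m) n
      = D (act a m n) + (if n = 0 then 0 else act a m (n-1))
  jacobi : ∀ a b v p q,
      act a (act b v q) p - act b (act a v p) q
        = ∑ j ∈ Finset.range (p+1), (((q+j).choose j : F)) • act (L.br a b (p-j)) v (q+j)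

variable {F}
variable {A M : Type*} [AddCommGroup A] [Module F A] [AddCommGroup M] [Module F M]

/-- Torsion elements of the `F[∂]`-module `A`. -/
def IsTor (L : LCA F A) (x : A) : Prop :=
  ∃ p : Polynomial F, p ≠ 0 ∧ Polynomial.aeval L.D p x = 0

/-- `A` decomposes, as an `F[∂]`-module, into the direct sum of its torsion and
a free complementary submodule `F[∂] ⊗ U`. -/
def Decomposes (L : LCA F A) : Prop :=
  ∃ U : Submodule F A, Function.Bijective
    (fun p : {x : A // IsTor L x} × (ℕ →₀ U) =>
      (p.1 : A) + p.2.sum (fun n u => (L.D ^ n) (u : A)))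

variable {L : LCA F A}

/-- The condition for a coefficient family
`γ : A^{⊗ k} → F[λ₁,…,λ_k] ⊗ M` (recorded via the coefficients
`γ a ν` of `λ^ν`) to be a basic `k`-cochain: `F`-multilinearity, polynomiality,
sesquilinearity (A1) and skew-symmetry (A2). -/
structure IsGamma (R : LCAMod F L M) (k : ℕ)
    (γ : (Fin k → A) → (Fin k → ℕ) → M) : Prop where
  map_add : ∀ (a : Fin k → A) (i : Fin k) (x y : A),
    γ (Function.update a i (x + y)) = γ (Function.update a i x) + γ (Function.update a i y)
  map_smul : ∀ (a : Fin k → A) (i : Fin k) (r : F) (x : A),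
    γ (Function.update a i (r • x)) = r • γ (Function.update a i x)
  fin : ∀ a, (Function.support (γ a)).Finite
  sesq : ∀ (a : Fin k → A) (i : Fin k) (x : A) (ν : Fin k → ℕ),
    γ (Function.update a i (L.D x)) ν
      = (if ν i = 0 then 0 else - γ (Function.update a i x) (Function.update ν i (ν i - 1)))
  skew : ∀ (a : Fin k → A) (ν : Fin k → ℕ) (σ : Equiv.Perm (Fin k)),
    γ (a ∘ σ) (ν ∘ σ) = ((Equiv.Perm.sign σ : ℤˣ) : ℤ) • γ a ν

/-- The action of `∂` on basic cochains: `(∂γ) = (∂^M + λ₁ + ⋯ + λ_k) ∘ γ`,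
in terms of coefficients. -/
def GammaD (R : LCAMod F L M) {k : ℕ} (γ : (Fin k → A) → (Fin k → ℕ) → M) :
    (Fin k → A) → (Fin k → ℕ) → M :=
  fun a ν => R.D (γ a ν)
    + ∑ i : Fin k, (if ν i = 0 then 0 else γ a (Function.update ν i (ν i - 1)))

/-- Substitution of the auxiliary variable `μ` by
`λ† = −λ₁ − ⋯ − λ_K − ∂^M` (with `∂^M` moved to the left) in a polynomial
`q` in `λ₁,…,λ_K, μ`, recorded through its coefficients `q ρ n` of `λ^ρ μ^n`.
The result is the coefficient of `λ^ν`. -/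
noncomputable def substDag {K : ℕ} (DM : M →ₗ[F] M)
    (q : (Fin K → ℕ) → ℕ → M) (ν : Fin K → ℕ) : M :=
  ∑ ρ ∈ Finset.Iic ν, ∑ᶠ s : ℕ,
    (((-1 : F)^(wt (fun r => ν r - ρ r) + s)) * (mnom (fun r => ν r - ρ r) s : F)) •
      ((DM ^ s) (q ρ (wt (fun r => ν r - ρ r) + s)))

/-- The condition for a coefficient family
`c : A^{⊗(k+1)} → F[λ₁,…,λ_k] ⊗ M` to be a `(k+1)`-`λ`-bracket
(an element of `C^{k+1}(A,M)`), i.e. conditions B1, B2, B3 of the paper,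
written in terms of the coefficients `c a ν` of `λ^ν`. -/
structure IsCBr (R : LCAMod F L M) (k : ℕ)
    (c : (Fin (k+1) → A) → (Fin k → ℕ) → M) : Prop where
  map_add : ∀ (a : Fin (k+1) → A) (i : Fin (k+1)) (x y : A),
    c (Function.update a i (x + y)) = c (Function.update a i x) + c (Function.update a i y)
  map_smul : ∀ (a : Fin (k+1) → A) (i : Fin (k+1)) (r : F) (x : A),
    c (Function.update a i (r • x)) = r • c (Function.update a i x)
  fin : ∀ a, (Function.support (c a)).Finite
  sesq₁ : ∀ (a : Fin (k+1) → A) (i : Fin k) (x : A) (ν : Fin k → ℕ),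
    c (Function.update a i.castSucc (L.D x)) ν
      = (if ν i = 0 then 0
         else - c (Function.update a i.castSucc x) (Function.update ν i (ν i - 1)))
  sesq₂ : ∀ (a : Fin (k+1) → A) (x : A) (ν : Fin k → ℕ),
    c (Function.update a (Fin.last k) (L.D x)) ν
      = R.D (c (Function.update a (Fin.last k) x) ν)
        + ∑ i : Fin k, (if ν i = 0 then 0
            else c (Function.update a (Fin.last k) x) (Function.update ν i (ν i - 1)))
  skew : ∀ (a : Fin (k+1) → A) (ν : Fin k → ℕ) (σ : Equiv.Perm (Fin (k+1))),
    c a ν = ((Equiv.Perm.sign σ : ℤˣ) : ℤ) • substDag R.D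
      (fun ρ n =>
        if (Fin.snoc ρ n : Fin (k+1) → ℕ) (σ (Fin.last k)) = 0 then
          c (a ∘ σ) (fun i : Fin k => (Fin.snoc ρ n : Fin (k+1) → ℕ) (σ i.castSucc))
        else 0) ν

/-- The subspace `C̄`: poly-`λ`-brackets vanishing whenever one of the arguments is
a torsion element of `A`. -/
def VanishOnTorsion (L : LCA F A) {k : ℕ}
    (c : (Fin (k+1) → A) → (Fin k → ℕ) → M) : Prop :=
  ∀ a ν, (∃ i, IsTor L (a i)) → c a ν = 0

/-- The differential `d : C⁰ = M/∂M → C¹`, `(d∫m)(a) = a_{−∂^M} m`. -/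
noncomputable def dZero (R : LCAMod F L M) (m : M) :
    (Fin 1 → A) → (Fin 0 → ℕ) → M :=
  fun a _ => ∑ᶠ n, ((-1 : F)^n) • ((R.D ^ n) (R.act (a 0) m n))

/-- The second term of the differential `d` of the complex of
poly-`λ`-brackets (the double sum over `i < j` in the paper's formula). -/
noncomputable def dPair (L : LCA F A) (R : LCAMod F L M) :
    ∀ {k : ℕ}, ((Fin (k+1) → A) → (Fin k → ℕ) → M) →
      (Fin (k+2) → A) → (Fin (k+1) → ℕ) → M
  | 0, _, _, _ => 0
  | (s+1), c, a, ν =>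
    ∑ i : Fin (s+2), ∑ j : Fin (s+2),
      if i < j then
        ((-1 : F)^(s + i.1 + j.1 + 1)) •
          ∑ p ∈ Finset.range (ν i + 1),
            substDag R.D
              (fun ρ n =>
                if ρ i = 0 ∧ ρ j = 0 then
                  c (Fin.snoc (Fin.snoc (rm2 i.1 j.1 (Fin.init a)) (a (Fin.last (s+2))))
                      (L.br (a i.castSucc) (a j.castSucc) p))
                    (Fin.snoc (rm2 i.1 j.1 ρ) n)
                else 0)
              (Function.update ν i (ν i - p))
      else 0

/-- The differential `d` on the complex `C^•(A,M)` of poly-`λ`-brackets,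
written in terms of coefficients (formula (1.8) of the paper). Here `c` is a
`(k+1)`-`λ`-bracket and `dRaw c` is a `(k+2)`-`λ`-bracket. -/
noncomputable def dRaw (L : LCA F A) (R : LCAMod F L M) {k : ℕ}
    (c : (Fin (k+1) → A) → (Fin k → ℕ) → M) :
    (Fin (k+2) → A) → (Fin (k+1) → ℕ) → M :=
  fun a ν =>
    (∑ i : Fin (k+1), ((-1 : F)^i.1) •
        R.act (a i.castSucc) (c (rm1 i.1 a) (rm1 i.1 ν)) (ν i))
    + dPair L R c a ν
    + ((-1 : F)^(k+1)) • substDag R.D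
        (fun ρ n =>
          if ρ (Fin.last k) = 0 then
            R.act (a (Fin.last (k+1))) (c (Fin.init a) (Fin.init ρ)) n
          else 0) ν
    + ∑ i : Fin (k+1), ((-1 : F)^(i.1+1)) •
        c (Fin.snoc (rm1 i.1 (Fin.init a)) (L.br (a i.castSucc) (a (Fin.last (k+1))) (ν i)))
          (rm1 i.1 ν)

/-- The second term of the differential `δ` of the basic complex
`Γ̃^•(A,M)` (the double sum over `i < j`). -/
noncomputable def deltaPair (L : LCA F A) (R : LCAMod F L M) :
    ∀ {k : ℕ}, ((Fin k → A) → (Fin k → ℕ) → M) →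
      (Fin (k+1) → A) → (Fin (k+1) → ℕ) → M
  | 0, _, _, _ => 0
  | (s+1), γ, a, ν =>
    ∑ i : Fin (s+2), ∑ j : Fin (s+2),
      if i < j then
        ((-1 : F)^(s + i.1 + j.1)) •
          ∑ p ∈ Finset.range (ν i + 1),
            ((((ν i - p) + ν j).choose (ν i - p) : F)) •
              γ (Fin.snoc (rm2 i.1 j.1 a) (L.br (a i) (a j) p))
                (Fin.snoc (rm2 i.1 j.1 ν) ((ν i - p) + ν j))
      else 0

/-- The differential `δ` of the basic Lie conformal algebra cohomology complex
`Γ̃^•(A,M)`, written in terms of coefficients of the `λ`-expansions. -/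
noncomputable def deltaRaw (L : LCA F A) (R : LCAMod F L M) {k : ℕ}
    (γ : (Fin k → A) → (Fin k → ℕ) → M) :
    (Fin (k+1) → A) → (Fin (k+1) → ℕ) → M :=
  fun a ν =>
    (∑ i : Fin (k+1), ((-1 : F)^i.1) •
        R.act (a i) (γ (rm1 i.1 a) (rm1 i.1 ν)) (ν i))
    + deltaPair L R γ a ν

/-- The map `ψ^{k+1} : Γ̃^{k+1}(A,M) → C^{k+1}(A,M)`,
`{a₁ λ₁ ⋯ a_k λ_k a_{k+1}}_{ψ(γ)} = γ_{λ₁,…,λ_k,λ†}(a₁,…,a_{k+1})`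
where `λ† = −λ₁ − ⋯ − λ_k − ∂^M` (with `∂^M` moved to the left). -/
noncomputable def psiRaw (R : LCAMod F L M) {k : ℕ}
    (γ : (Fin (k+1) → A) → (Fin (k+1) → ℕ) → M) :
    (Fin (k+1) → A) → (Fin k → ℕ) → M :=
  fun a ν => substDag R.D (fun ρ n => γ a (Fin.snoc ρ n)) ν

/-- The map `χ` on "polynomial duals": given
`φ : Hom(F[λ₁,…,λ_K], M)` (recorded through its values `φ ν` on monomials),
`chiMap DM φ` is `φ ∘ (substitution λ_{K+1} ↦ −λ₁ − ⋯ − λ_K + ∂^M)`,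
with `∂^M` moved to the left. -/
noncomputable def chiMap {K : ℕ} (DM : M →ₗ[F] M) (φ : (Fin K → ℕ) → M) :
    (Fin (K+1) → ℕ) → M :=
  fun ν =>
    ∑ m ∈ Finset.Iic (fun _ : Fin K => ν (Fin.last K)),
      if wt m ≤ ν (Fin.last K) then
        (((-1 : F)^(wt m)) * (mnom m (ν (Fin.last K) - wt m) : F)) •
          ((DM ^ (ν (Fin.last K) - wt m)) (φ (fun r => Fin.init ν r + m r)))
      else 0

section Product

variable (F) {N : Type*} [CommRing N] [Algebra F N]

/-- The exterior multiplication of basic cochains, in coefficient form. -/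
noncomputable def wedge {h k : ℕ}
    (α : (Fin h → A) → (Fin h → ℕ) → N) (β : (Fin k → A) → (Fin k → ℕ) → N) :
    (Fin (h+k) → A) → (Fin (h+k) → ℕ) → N :=
  fun a ν =>
    ((h.factorial * k.factorial : F))⁻¹ •
      ∑ σ : Equiv.Perm (Fin (h+k)),
        ((Equiv.Perm.sign σ : ℤˣ) : ℤ) •
          (α (fun i => a (σ (Fin.castAdd k i))) (fun i => ν (σ (Fin.castAdd k i))) *
           β (fun i => a (σ (Fin.natAdd h i))) (fun i => ν (σ (Fin.natAdd h i))))

/-- Contraction of a basic cochain by (a generator of) a basic `h`-chain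
`b ⊗ φ ∈ A^{⊗h} ⊗ Hom(F[λ₁,…,λ_h], N)`. -/
noncomputable def iotaG {h k : ℕ} (b : Fin h → A) (φ : (Fin h → ℕ) → N)
    (γ : (Fin (h + k) → A) → (Fin (h + k) → ℕ) → N) :
    (Fin k → A) → (Fin k → ℕ) → N :=
  fun a ν => ∑ᶠ ρ : Fin h → ℕ, φ ρ * γ (Fin.append b a) (Fin.append ρ ν)

/-- The action of `∂` on (generators of) the space of basic `h`-chains:
`∂(a ⊗ φ) = a ⊗ ((−λ₁^* − ⋯ − λ_h^* + ∂)φ)`. -/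
def chainD (R : LCAMod F L N) {h : ℕ} (φ : (Fin h → ℕ) → N) : (Fin h → ℕ) → N :=
  fun ρ => R.D (φ ρ) - ∑ i : Fin h, φ (Function.update ρ i (ρ i + 1))

/-- Contraction by a basic 1-chain `a₀ ⊗ m(x)`, where `m(x) = ∑ m_k x^k` is recorded
by its coefficient function `m : ℕ → N` (formula (3.23) of the paper, using the
pairing `⟨x^p, λ^q⟩ = q! δ_{p,q}`). -/
noncomputable def iota1 {k : ℕ} (a₀ : A) (m : ℕ → N)
    (γ : (Fin (k+1) → A) → (Fin (k+1) → ℕ) → N) : (Fin k → A) → (Fin k → ℕ) → N :=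
  fun a ν => ∑ᶠ q : ℕ, (q.factorial : F) • (m q * γ (Fin.cons a₀ a) (Fin.cons q ν))

/-- The Lie derivative `L_ξ = δ ∘ ι_ξ + ι_ξ ∘ δ` along a basic 1-chain. -/
noncomputable def lie1 (R : LCAMod F L N) {k : ℕ} (a₀ : A) (m : ℕ → N)
    (γ : (Fin (k+1) → A) → (Fin (k+1) → ℕ) → N) : (Fin (k+1) → A) → (Fin (k+1) → ℕ) → N :=
  deltaRaw L R (iota1 F a₀ m γ) + iota1 F a₀ m (deltaRaw L R γ)

end Product

end LCC

/-!
Write `ι_ξ γ` as the pairing `∑_ρ φ(λ^ρ) γ_{ρ,ν}` in the first `h` variables. Of the operator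
`∂ = ∂^M + λ₁ + ⋯ + λ_{h+k}`, the part `∂^M` is a derivation and crosses the pairing at the cost
of the term `⟨∂^M φ, γ⟩`; the variables `λ_{h+1}, …, λ_{h+k}` are not touched by the pairing and
commute with `ι_ξ`; and multiplication by `λⱼ`, `j ≤ h`, is transposed by the pairing into `λⱼ^*`
acting on `φ`. What survives in `∂ ∘ ι_ξ − ι_ξ ∘ ∂` is the contraction with
`(∂ − λ₁^* − ⋯ − λ_h^*)φ`, i.e. with `∂ξ`.
-/

namespace Fin

variable {α : Type*} {h k : ℕ}

theorem castAdd_ne_natAdd (p : Fin h) (i : Fin k) : castAdd k p ≠ natAdd h i := by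
  simp only [ne_eq, Fin.ext_iff, val_castAdd, val_natAdd]
  omega

theorem append_update_left (b : Fin h → α) (a : Fin k → α) (i : Fin h) (x : α) :
    append (Function.update b i x) a = Function.update (append b a) (castAdd k i) x := by
  ext j
  refine addCases (fun p => ?_) (fun p => ?_) j
  · simp [Function.update_apply, castAdd_inj]
  · simp [(castAdd_ne_natAdd i p).symm]

theorem append_update_right (b : Fin h → α) (a : Fin k → α) (i : Fin k) (x : α) :
    append b (Function.update a i x) = Function.update (append b a) (natAdd h i) x := by
  ext j
  refine addCases (fun p => ?_) (fun p => ?_) j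
  · simp [castAdd_ne_natAdd p i]
  · simp [Function.update_apply, natAdd_inj]

theorem append_left_injective (ν : Fin k → α) :
    Function.Injective fun ρ : Fin h → α => append ρ ν :=
  fun _ _ he => funext fun i => by simpa using congrFun he (castAdd k i)

theorem append_comp_sumCongr (b : Fin h → α) (a : Fin k → α) (σ : Equiv.Perm (Fin k)) :
    append b a ∘ finSumFinEquiv.permCongr (Equiv.sumCongr (Equiv.refl (Fin h)) σ)
      = append b (a ∘ σ) := by
  ext j
  refine addCases (fun p => ?_) (fun p => ?_) j <;>
    simp [Equiv.permCongr_apply]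

end Fin

theorem Function.HasFiniteSupport.comp_append {M : Type*} [Zero M] {h k : ℕ}
    {f : (Fin (h + k) → ℕ) → M} (hf : HasFiniteSupport f) (ν : Fin k → ℕ) :
    HasFiniteSupport fun ρ => f (Fin.append ρ ν) :=
  hf.comp_of_injective (Fin.append_left_injective ν)

namespace LCC

open Function

section Contraction

variable {M : Type*} [Ring M] {h k n : ℕ}

/-- The paper's `φ^μ`, applied in the first `h` variables. -/
noncomputable def contractLeft (φ : (Fin h → ℕ) → M) (f : (Fin (h + k) → ℕ) → M) :
    (Fin k → ℕ) → M :=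
  fun ν => ∑ᶠ ρ, φ ρ * f (Fin.append ρ ν)

/-- The coefficients of `λᵢ f` in terms of those of `f`. -/
def mulVar (i : Fin n) (f : (Fin n → ℕ) → M) : (Fin n → ℕ) → M :=
  fun ν => if ν i = 0 then 0 else f (update ν i (ν i - 1))

theorem hasFiniteSupport_mulVar (i : Fin n) {f : (Fin n → ℕ) → M} (hf : HasFiniteSupport f) :
    HasFiniteSupport (mulVar i f) := by
  refine (hf.image fun ρ => update ρ i (ρ i + 1)).subset fun ν hν => ?_
  have hνi : ν i ≠ 0 := fun h0 => hν (if_pos h0)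
  refine ⟨update ν i (ν i - 1), fun h0 => hν ((if_neg hνi).trans h0), ?_⟩
  simp [Nat.sub_add_cancel (Nat.one_le_iff_ne_zero.2 hνi)]

theorem hasFiniteSupport_contractLeft (φ : (Fin h → ℕ) → M) {f : (Fin (h + k) → ℕ) → M}
    (hf : HasFiniteSupport f) : HasFiniteSupport (contractLeft φ f) := by
  refine (hf.image fun ω i => ω (Fin.natAdd h i)).subset fun ν hν => ?_
  obtain ⟨ρ, -, hρ⟩ := exists_ne_zero_of_finsum_mem_ne_zero (s := Set.univ)
    (by simpa [contractLeft] using hν)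
  exact ⟨Fin.append ρ ν, right_ne_zero_of_mul hρ, by simp⟩

theorem contractLeft_add (φ : (Fin h → ℕ) → M) {f g : (Fin (h + k) → ℕ) → M}
    (hf : HasFiniteSupport f) (hg : HasFiniteSupport g) :
    contractLeft φ (f + g) = contractLeft φ f + contractLeft φ g := by
  ext ν
  simp only [contractLeft, Pi.add_apply, mul_add]
  exact finsum_add_distrib ((hf.comp_append ν).fun_mul_right _)
    ((hg.comp_append ν).fun_mul_right _)

theorem contractLeft_neg (φ : (Fin h → ℕ) → M) (f : (Fin (h + k) → ℕ) → M) :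
    contractLeft φ (-f) = -contractLeft φ f := by
  ext ν
  simp only [contractLeft, Pi.neg_apply, mul_neg, finsum_neg_distrib]

theorem contractLeft_smul {S : Type*} [Monoid S] [DistribMulAction S M] [SMulCommClass S M M]
    (φ : (Fin h → ℕ) → M) (r : S) {f : (Fin (h + k) → ℕ) → M} (hf : HasFiniteSupport f) :
    contractLeft φ (r • f) = r • contractLeft φ f := by
  ext ν
  simp only [contractLeft, Pi.smul_apply, mul_smul_comm]
  exact (smul_finsum' r ((hf.comp_append ν).fun_mul_right _)).symm

theorem contractLeft_sum {ι : Type*} (φ : (Fin h → ℕ) → M) (s : Finset ι)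
    {f : ι → (Fin (h + k) → ℕ) → M} (hf : ∀ i, HasFiniteSupport (f i)) :
    contractLeft φ (fun ω => ∑ i ∈ s, f i ω) = ∑ i ∈ s, contractLeft φ (f i) := by
  ext ν
  simp only [contractLeft, Finset.sum_apply, Finset.mul_sum]
  exact (sum_finsum_comm s _ fun i _ => ((hf i).comp_append ν).fun_mul_right _).symm

theorem map_contractLeft_of_leibniz (D : M →+ M) (hD : ∀ x y, D (x * y) = D x * y + x * D y)
    (φ : (Fin h → ℕ) → M) {f : (Fin (h + k) → ℕ) → M} (hf : HasFiniteSupport f)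
    (ν : Fin k → ℕ) :
    D (contractLeft φ f ν)
      = contractLeft (fun ρ => D (φ ρ)) f ν + contractLeft φ (fun ω => D (f ω)) ν := by
  have hfν := hf.comp_append ν
  simp only [contractLeft]
  rw [D.map_finsum (hfν.fun_mul_right _), ← finsum_add_distrib (hfν.fun_mul_right _)
    ((hfν.fun_comp D.map_zero).fun_mul_right _)]
  simp only [hD]

theorem finsum_mul_mulVar (φ f : (Fin n → ℕ) → M) (j : Fin n) :
    ∑ᶠ ρ, φ ρ * mulVar j f ρ = ∑ᶠ ρ, φ (update ρ j (ρ j + 1)) * f ρ := by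
  set raise : (Fin n → ℕ) → Fin n → ℕ := fun ρ => update ρ j (ρ j + 1)
  have hraise : Injective raise := fun ρ ρ' he => by
    ext i
    have := congrFun he i
    by_cases hij : i = j
    · subst hij; simpa [raise] using this
    · simpa [raise, hij] using this
  have hmulVar_raise : ∀ ρ, mulVar j f (raise ρ) = f ρ := fun ρ => by simp [mulVar, raise]
  rw [← finsum_mem_univ, finsum_mem_inter_support_eq' _ Set.univ (Set.range raise),
    finsum_mem_range hraise]
  · simp only [hmulVar_raise]
    rfl
  intro ν hν
  have hνj : ν j ≠ 0 := fun h0 => hν (by simp [mulVar, h0])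
  simp only [Set.mem_univ, Set.mem_range, true_iff]
  exact ⟨update ν j (ν j - 1),
    by simp [raise, Nat.sub_add_cancel (Nat.one_le_iff_ne_zero.2 hνj)]⟩

theorem mulVar_castAdd_append (j : Fin h) (f : (Fin (h + k) → ℕ) → M) (ρ : Fin h → ℕ)
    (ν : Fin k → ℕ) :
    mulVar (Fin.castAdd k j) f (Fin.append ρ ν) = mulVar j (fun ρ => f (Fin.append ρ ν)) ρ := by
  simp [mulVar, Fin.append_update_left]

theorem mulVar_natAdd_append (i : Fin k) (f : (Fin (h + k) → ℕ) → M) (ρ : Fin h → ℕ)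
    (ν : Fin k → ℕ) :
    mulVar (Fin.natAdd h i) f (Fin.append ρ ν) = mulVar i (fun ν => f (Fin.append ρ ν)) ν := by
  simp [mulVar, Fin.append_update_right]

theorem contractLeft_mulVar_castAdd (φ : (Fin h → ℕ) → M) (f : (Fin (h + k) → ℕ) → M)
    (j : Fin h) :
    contractLeft φ (mulVar (Fin.castAdd k j) f)
      = contractLeft (fun ρ => φ (update ρ j (ρ j + 1))) f := by
  ext ν
  simp only [contractLeft, mulVar_castAdd_append]
  exact finsum_mul_mulVar φ (fun ρ => f (Fin.append ρ ν)) j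

theorem contractLeft_mulVar_natAdd (φ : (Fin h → ℕ) → M) (f : (Fin (h + k) → ℕ) → M)
    (i : Fin k) :
    contractLeft φ (mulVar (Fin.natAdd h i) f) = mulVar i (contractLeft φ f) := by
  ext ν
  simp only [contractLeft, mulVar_natAdd_append]
  by_cases hνi : ν i = 0 <;> simp [mulVar, hνi, contractLeft]


theorem contractLeft_commutator (D : M →+ M) (hD : ∀ x y, D (x * y) = D x * y + x * D y)
    (φ : (Fin h → ℕ) → M) {f : (Fin (h + k) → ℕ) → M} (hf : HasFiniteSupport f)
    (ν : Fin k → ℕ) :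
    D (contractLeft φ f ν) + ∑ i, mulVar i (contractLeft φ f) ν
        - contractLeft φ (fun ω => D (f ω) + ∑ j, mulVar j f ω) ν
      = contractLeft (fun ρ => D (φ ρ) - ∑ j, φ (update ρ j (ρ j + 1))) f ν := by
  have hDf : HasFiniteSupport fun ω => D (f ω) := hf.fun_comp D.map_zero
  have hmulVar : ∀ j, HasFiniteSupport (mulVar j f) := fun j => hasFiniteSupport_mulVar j hf
  have hcochain : contractLeft φ (fun ω => D (f ω) + ∑ j, mulVar j f ω)
      = contractLeft φ (fun ω => D (f ω)) + ∑ j, contractLeft φ (mulVar j f) := by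
    rw [← contractLeft_sum φ _ hmulVar]
    exact contractLeft_add φ hDf (HasFiniteSupport.sum hmulVar _)
  have hchain : contractLeft (fun ρ => D (φ ρ) - ∑ j, φ (update ρ j (ρ j + 1))) f ν
      = contractLeft (fun ρ => D (φ ρ)) f ν
        - ∑ j, contractLeft (fun ρ => φ (update ρ j (ρ j + 1))) f ν := by
    have hfν := hf.comp_append ν
    simp only [contractLeft, sub_mul, Finset.sum_mul]
    rw [finsum_sub_distrib (hfν.fun_mul_right _)
        (HasFiniteSupport.sum (fun j => hfν.fun_mul_right _) _),
      sum_finsum_comm _ _ fun j _ => hfν.fun_mul_right _]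
  rw [hcochain, hchain, Pi.add_apply, Finset.sum_apply, Fin.sum_univ_add,
    map_contractLeft_of_leibniz D hD φ hf]
  simp only [contractLeft_mulVar_castAdd, contractLeft_mulVar_natAdd]
  abel

end Contraction

theorem iotaG_apply {A M : Type*} [CommRing M] {h k : ℕ} (b : Fin h → A)
    (φ : (Fin h → ℕ) → M) (γ : (Fin (h + k) → A) → (Fin (h + k) → ℕ) → M) (a : Fin k → A) :
    iotaG (h := h) (k := k) b φ γ a = contractLeft φ (γ (Fin.append b a)) :=
  rfl

section Cochains

variable {F : Type*} [Field F] {A M : Type*} [AddCommGroup A] [Module F A] [CommRing M]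
  [Algebra F M] {L : LCA F A} {R : LCAMod F L M} {h k : ℕ}

theorem isGamma_iotaG (b : Fin h → A) (φ : (Fin h → ℕ) → M)
    {γ : (Fin (h + k) → A) → (Fin (h + k) → ℕ) → M} (hγ : IsGamma R (h + k) γ) :
    IsGamma R k (iotaG (h := h) (k := k) b φ γ) where
  map_add a i x y := by
    simp only [iotaG_apply, Fin.append_update_right, hγ.map_add]
    exact contractLeft_add φ (hγ.fin _) (hγ.fin _)
  map_smul a i r x := by
    simp only [iotaG_apply, Fin.append_update_right, hγ.map_smul]
    exact contractLeft_smul φ r (hγ.fin _)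
  fin a := hasFiniteSupport_contractLeft φ (hγ.fin _)
  sesq a i x ν := by
    have hsesq : γ (Fin.append b (update a i (L.D x)))
        = -mulVar (Fin.natAdd h i) (γ (Fin.append b (update a i x))) := by
      ext ω
      rw [Fin.append_update_right, hγ.sesq, ← Fin.append_update_right]
      simp only [mulVar, Pi.neg_apply, neg_ite, neg_zero]
    rw [iotaG_apply, iotaG_apply, hsesq, contractLeft_neg, contractLeft_mulVar_natAdd]
    simp only [mulVar, Pi.neg_apply, neg_ite, neg_zero]
  skew a ν σ := by
    have hperm : ∀ ρ, γ (Fin.append b (a ∘ σ)) (Fin.append ρ (ν ∘ σ))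
        = ((Equiv.Perm.sign σ : ℤˣ) : ℤ) • γ (Fin.append b a) (Fin.append ρ ν) := fun ρ => by
      rw [← Fin.append_comp_sumCongr, ← Fin.append_comp_sumCongr, hγ.skew,
        Equiv.Perm.sign_permCongr, Equiv.Perm.sign_sumCongr, Equiv.Perm.sign_refl, one_mul]
    rw [iotaG_apply, iotaG_apply, ← Pi.smul_apply, ← contractLeft_smul φ _ (hγ.fin _)]
    simp only [contractLeft, hperm, Pi.smul_apply]

theorem gammaD_iotaG_sub_iotaG_gammaD (hD : ∀ m n : M, R.D (m * n) = R.D m * n + m * R.D n)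
    (b : Fin h → A) (φ : (Fin h → ℕ) → M)
    {γ : (Fin (h + k) → A) → (Fin (h + k) → ℕ) → M} (hγ : IsGamma R (h + k) γ) :
    GammaD R (iotaG (h := h) (k := k) b φ γ) - iotaG (h := h) (k := k) b φ (GammaD R γ)
      = iotaG (h := h) (k := k) b (chainD F R φ) γ := by
  ext a ν
  exact contractLeft_commutator R.D.toAddMonoidHom hD φ (hγ.fin _) ν

theorem iotaG_gammaD_of_chainD_eq_zero (hD : ∀ m n : M, R.D (m * n) = R.D m * n + m * R.D n)
    (b : Fin h → A) {φ : (Fin h → ℕ) → M} (hφ : chainD F R φ = 0)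
    {γ : (Fin (h + k) → A) → (Fin (h + k) → ℕ) → M} (hγ : IsGamma R (h + k) γ) :
    iotaG (h := h) (k := k) b φ (GammaD R γ) = GammaD R (iotaG (h := h) (k := k) b φ γ) := by
  have hcomm := gammaD_iotaG_sub_iotaG_gammaD hD b φ hγ
  rw [hφ] at hcomm
  refine (sub_eq_zero.1 (hcomm.trans ?_)).symm
  ext a ν
  simp [iotaG]

end Cochains

end LCC

open LCC in
theorem contraction_commutator_with_partial_general
    {F : Type*} [Field F]
    {A M : Type*} [AddCommGroup A] [Module F A] [CommRing M] [Algebra F M]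
    (L : LCA F A) (R : LCAMod F L M)
    (hD : ∀ m n : M, R.D (m * n) = R.D m * n + m * R.D n)
    (h k : ℕ) (b : Fin h → A) (φ : (Fin h → ℕ) → M)
    (γ : (Fin (h+k) → A) → (Fin (h+k) → ℕ) → M) (hγ : IsGamma R (h+k) γ) :
    -- ι_ξ maps basic cochains to basic cochains
    IsGamma R k (iotaG (h := h) (k := k) b φ γ) ∧
    -- [∂, ι_ξ] = ι_{∂ξ}
    (GammaD R (iotaG (h := h) (k := k) b φ γ) - iotaG (h := h) (k := k) b φ (GammaD R γ)
      = iotaG (h := h) (k := k) b (chainD F R φ) γ) ∧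
    -- reduced chains: ι_ξ commutes with ∂ and descends to the reduced complex
    (chainD F R φ = 0 →
      (iotaG (h := h) (k := k) b φ (GammaD R γ) = GammaD R (iotaG (h := h) (k := k) b φ γ)) ∧
      ((∃ θ : (Fin (h+k) → A) → (Fin (h+k) → ℕ) → M, IsGamma R (h+k) θ ∧ γ = GammaD R θ) →
        ∃ θ' : (Fin k → A) → (Fin k → ℕ) → M, IsGamma R k θ' ∧ (iotaG (h := h) (k := k) b φ γ : (Fin k → A) → (Fin k → ℕ) → M) = GammaD R θ')) := by
  refine ⟨isGamma_iotaG b φ hγ, gammaD_iotaG_sub_iotaG_gammaD hD b φ hγ,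
    fun hφ => ⟨iotaG_gammaD_of_chainD_eq_zero hD b hφ hγ, ?_⟩⟩
  rintro ⟨θ, hθ, rfl⟩
  exact ⟨iotaG b φ θ, isGamma_iotaG b φ hθ, iotaG_gammaD_of_chainD_eq_zero hD b hφ hθ⟩

open LCC in
/-- **Statement 10.** Let `A` be a Lie conformal algebra and `M` an `A`-module with a
commutative associative product on which `∂^M` and all `a_λ` act by derivations.
For every basic `h`-chain `ξ = b ⊗ φ ∈ Γ̃_h(A,M)` one has
`[∂, ι_ξ] = ∂ ∘ ι_ξ − ι_ξ ∘ ∂ = ι_{∂ξ}` as operators `Γ̃^{h+k}(A,M) → Γ̃^k(A,M)`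
(where `∂ξ = b ⊗ ((−λ₁^* − ⋯ − λ_h^* + ∂)φ)`).  In particular, if `ξ` is a reduced
`h`-chain (`∂ξ = 0`), then `ι_ξ` commutes with `∂` and induces a well-defined
contraction operator `Γ^{h+k}(A,M) → Γ^k(A,M)` on the reduced complex. -/
theorem contraction_commutator_with_partial
    {F : Type*} [Field F] [CharZero F]
    {A M : Type*} [AddCommGroup A] [Module F A] [CommRing M] [Algebra F M]
    (L : LCA F A) (R : LCAMod F L M)
    (hD : ∀ m n : M, R.D (m * n) = R.D m * n + m * R.D n)
    (hact : ∀ (a : A) (m n : M) (p : ℕ),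
      R.act a (m * n) p = R.act a m p * n + m * R.act a n p)
    (h k : ℕ) (b : Fin h → A) (φ : (Fin h → ℕ) → M)
    (γ : (Fin (h+k) → A) → (Fin (h+k) → ℕ) → M) (hγ : IsGamma R (h+k) γ) :
    -- ι_ξ maps basic cochains to basic cochains
    IsGamma R k (iotaG (h := h) (k := k) b φ γ) ∧
    -- [∂, ι_ξ] = ι_{∂ξ}
    (GammaD R (iotaG (h := h) (k := k) b φ γ) - iotaG (h := h) (k := k) b φ (GammaD R γ)
      = iotaG (h := h) (k := k) b (chainD F R φ) γ) ∧
    -- reduced chains: ι_ξ commutes with ∂ and descends to the reduced complex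
    (chainD F R φ = 0 →
      (iotaG (h := h) (k := k) b φ (GammaD R γ) = GammaD R (iotaG (h := h) (k := k) b φ γ)) ∧
      ((∃ θ : (Fin (h+k) → A) → (Fin (h+k) → ℕ) → M, IsGamma R (h+k) θ ∧ γ = GammaD R θ) →
        ∃ θ' : (Fin k → A) → (Fin k → ℕ) → M, IsGamma R k θ' ∧ (iotaG (h := h) (k := k) b φ γ : (Fin k → A) → (Fin k → ℕ) → M) = GammaD R θ')) :=
  contraction_commutator_with_partial_general L R hD h k b φ γ hγ
end

section
/- Let A be a Lie conformal algebra and M an A-module endowed with a commutative associative product such that ∂^M and all a_λ (a ∈ A) act by derivations. For every x ∈ C_h(A,M) and every γ ∈ Γ^k(A,M) with k ≥ h, one has ι_x(ψ^k(γ)) = ψ^{k−h}(ι_{χ_h(x)}(γ)); i.e., the contraction operators on C^• and on Γ^• are compatible via the maps ψ and χ: the square with vertical maps ψ^k, ψ^{k−h} and horizontal maps ι_x: C^k → C^{k−h} and ι_ξ: Γ^k → Γ^{k−h} commutes whenever ξ = χ_h(x). -/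
namespace LCC

variable {F : Type*} [Field F] {A : Type*} [AddCommGroup A] [Module F A]
  {N : Type*} [CommRing N] [Algebra F N] {L : LCA F A}

/-- Contraction of a poly-`λ`-bracket `c ∈ C^k(A,M)` by (a generator of) an
`h`-chain `x = b ⊗ φ ∈ C_h(A,M)` with `h < k` (formula (3.40) of the paper):
`{a_{h+1} λ_{h+1} ⋯ a_k}_{ι_x c} = (χ_h φ)^μ ({a₁ λ₁ ⋯ a_k}_c)`.
Here `h = h'+1` and `k = h + (r+1)`. -/
noncomputable def iotaC (R : LCAMod F L N) {h' r : ℕ} (b : Fin (h'+1) → A)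
    (φ : (Fin h' → ℕ) → N)
    (c : (Fin ((h'+1)+(r+1)) → A) → (Fin ((h'+1)+r) → ℕ) → N) :
    (Fin (r+1) → A) → (Fin r → ℕ) → N :=
  fun a ν => ∑ᶠ ρ : Fin (h'+1) → ℕ,
    chiMap R.D φ ρ * c (Fin.append b a) (Fin.append ρ ν)

/-- Contraction of a poly-`λ`-bracket `c ∈ C^k(A,M)` by a `k`-chain `b ⊗ φ`
(the case `h = k`, formula (3.41) of the paper, before passing to `M/∂^M M`):
`ι_x c = ∫ φ^μ({a₁ λ₁ ⋯ a_k}_c)`. -/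
noncomputable def iotaCTop (R : LCAMod F L N) {h' : ℕ} (b : Fin (h'+1) → A)
    (φ : (Fin h' → ℕ) → N)
    (c : (Fin (h'+1) → A) → (Fin h' → ℕ) → N) : N :=
  ∑ᶠ ρ : Fin h' → ℕ, φ ρ * c b ρ

end LCC

namespace LCC

section AuxCombinatorics

variable {K : ℕ}

lemma wt_add (m m' : Fin K → ℕ) : wt (m + m') = wt m + wt m' := by
  simp [wt, Finset.sum_add_distrib]

lemma wt_single (i : Fin K) (n : ℕ) : wt (Pi.single i n) = n := by
  simp [wt]

lemma le_wt (m : Fin K → ℕ) (i : Fin K) : m i ≤ wt m :=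
  Finset.single_le_sum (fun _ _ => Nat.zero_le _) (Finset.mem_univ i)

@[simp] lemma wt_zero : wt (0 : Fin K → ℕ) = 0 := by simp [wt]

lemma sub_add_single {m : Fin K → ℕ} {i : Fin K} (h : m i ≠ 0) :
    m - Pi.single i 1 + Pi.single i 1 = m := by
  funext r
  by_cases hr : r = i
  · subst hr; simp only [Pi.add_apply, Pi.sub_apply, Pi.single_eq_same]; omega
  · simp [Pi.single_apply, hr]

lemma add_sub_single (m : Fin K → ℕ) (i : Fin K) :
    m + Pi.single i 1 - Pi.single i 1 = m := by
  funext r; by_cases hr : r = i <;> simp [Pi.single_apply, hr]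

lemma wt_sub_single {m : Fin K → ℕ} {i : Fin K} (h : m i ≠ 0) :
    wt (m - Pi.single i 1) + 1 = wt m := by
  conv_rhs => rw [← sub_add_single h]
  rw [wt_add, wt_single]

lemma mnom_spec (m : Fin K → ℕ) (s : ℕ) :
    mnom m s * ((∏ r, (m r).factorial) * s.factorial) = (wt m + s).factorial := by
  have h := Nat.multinomial_spec (Finset.univ : Finset (Fin (K+1))) (Fin.cons s m)
  rw [Fin.sum_univ_succ, Fin.prod_univ_succ] at h
  simp only [Fin.cons_zero, Fin.cons_succ] at h
  have : mnom m s = Nat.multinomial (Finset.univ : Finset (Fin (K+1))) (Fin.cons s m) := by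
    unfold mnom Nat.multinomial
    rw [Fin.sum_univ_succ, Fin.prod_univ_succ]
    simp only [Fin.cons_zero, Fin.cons_succ]
    rw [show wt m + s = s + ∑ i, m i from by rw [Nat.add_comm]; rfl]
    congr 1
    ring
  rw [this, mul_comm]
  rw [show (∏ r, (m r).factorial) * s.factorial
      = s.factorial * ∏ r, (m r).factorial from by ring] at *
  rw [h]
  rw [show wt m + s = s + ∑ i, m i from by rw [Nat.add_comm]; rfl]

lemma mnom_zero (s : ℕ) : mnom (0 : Fin K → ℕ) s = 1 := by
  have h := mnom_spec (0 : Fin K → ℕ) s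
  simp only [Pi.zero_apply, Nat.factorial_zero, Finset.prod_const_one, one_mul, wt_zero,
    Nat.zero_add] at h
  have h1 : mnom (0 : Fin K → ℕ) s * s.factorial = 1 * s.factorial := by rw [h, one_mul]
  exact Nat.eq_of_mul_eq_mul_right (Nat.factorial_pos s) h1

lemma mnom_pascal (m : Fin K → ℕ) (s : ℕ) (h : 0 < wt m + s) :
    mnom m s = (if s = 0 then 0 else mnom m (s-1))
      + ∑ i, (if m i = 0 then 0 else mnom (m - Pi.single i 1) s) := by
  have hX : 0 < (∏ r, (m r).factorial) * s.factorial :=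
    Nat.mul_pos (Finset.prod_pos fun r _ => Nat.factorial_pos _) (Nat.factorial_pos _)
  apply Nat.eq_of_mul_eq_mul_right hX
  rw [mnom_spec, add_mul, Finset.sum_mul]
  have t1 : (if s = 0 then 0 else mnom m (s-1)) * ((∏ r, (m r).factorial) * s.factorial)
      = (wt m + s - 1).factorial * s := by
    split_ifs with hs
    · simp [hs]
    · have hs1 : s.factorial = s * (s-1).factorial := by
        conv_lhs => rw [show s = (s-1)+1 from by omega]
        rw [Nat.factorial_succ]
        congr 1; omega
      rw [hs1, show (∏ r, (m r).factorial) * (s * (s-1).factorial)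
          = (∏ r, (m r).factorial) * (s-1).factorial * s from by ring, ← mul_assoc,
        mnom_spec]
      congr 2; omega
  have t2 : ∀ i : Fin K, (if m i = 0 then 0 else mnom (m - Pi.single i 1) s)
        * ((∏ r, (m r).factorial) * s.factorial)
      = (wt m + s - 1).factorial * m i := by
    intro i
    split_ifs with hi
    · simp [hi]
    · have h2 : ∀ r ∈ Finset.univ.erase i,
          ((m - Pi.single i 1 : Fin K → ℕ) r).factorial = (m r).factorial := by
        intro r hr
        have hr' := Finset.ne_of_mem_erase hr
        simp [Pi.single_apply, hr']
      have e1 : (∏ r, (m r).factorial)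
          = (m i).factorial * ∏ r ∈ Finset.univ.erase i, (m r).factorial :=
        (Finset.mul_prod_erase _ _ (Finset.mem_univ i)).symm
      have e2 : (∏ r, ((m - Pi.single i 1 : Fin K → ℕ) r).factorial)
          = (m i - 1).factorial * ∏ r ∈ Finset.univ.erase i, (m r).factorial := by
        refine ((Finset.mul_prod_erase Finset.univ
          (fun r => ((m - Pi.single i 1 : Fin K → ℕ) r).factorial)
          (Finset.mem_univ i)).symm).trans ?_
        congr 1
        · simp
        · exact Finset.prod_congr rfl h2
      have hprod : (∏ r, (m r).factorial)
          = m i * ∏ r, ((m - Pi.single i 1 : Fin K → ℕ) r).factorial := by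
        rw [e1, e2, ← mul_assoc]
        congr 1
        conv_lhs => rw [show m i = (m i - 1) + 1 from by omega]
        rw [Nat.factorial_succ]
        congr 1
        omega
      rw [hprod, show m i * (∏ r, ((m - Pi.single i 1 : Fin K → ℕ) r).factorial) * s.factorial
          = (∏ r, ((m - Pi.single i 1 : Fin K → ℕ) r).factorial) * s.factorial * m i from by ring,
        ← mul_assoc, mnom_spec]
      congr 2
      have := wt_sub_single hi
      omega
  rw [t1, Finset.sum_congr rfl fun i _ => t2 i, ← Finset.mul_sum]
  rw [show (∑ i, m i) = wt m from rfl]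
  conv_lhs => rw [show wt m + s = (wt m + s - 1) + 1 from by omega, Nat.factorial_succ]
  have : wt m + s - 1 + 1 = s + wt m := by omega
  rw [this]
  ring

end AuxCombinatorics

section AuxW

variable {K : ℕ}

/-- The finset of multi-indices of weight at most `n`. -/
def Wset (K n : ℕ) : Finset (Fin K → ℕ) :=
  (Finset.Iic fun _ => n).filter fun m => wt m ≤ n

lemma mem_Wset {n : ℕ} {m : Fin K → ℕ} : m ∈ Wset K n ↔ wt m ≤ n := by
  simp only [Wset, Finset.mem_filter, Finset.mem_Iic, and_iff_right_iff_imp]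
  intro h i
  exact (le_wt m i).trans h

lemma Wset_zero : Wset K 0 = {0} := by
  ext m
  simp only [mem_Wset, Finset.mem_singleton, Nat.le_zero]
  constructor
  · intro h
    funext i
    have h1 := le_wt m i
    have h2 : m i = 0 := by omega
    simpa using h2
  · rintro rfl
    simp

lemma Wset_mono {n : ℕ} : Wset K n ⊆ Wset K (n+1) := by
  intro m hm
  rw [mem_Wset] at *
  omega

lemma Wset_sum_shift {n : ℕ} {V : Type*} [AddCommMonoid V] (i : Fin K)
    (g : (Fin K → ℕ) → V) :
    ∑ m ∈ Wset K (n+1), (if m i = 0 then 0 else g m)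
      = ∑ m ∈ Wset K n, g (m + Pi.single i 1) := by
  classical
  have e0 : ∑ m ∈ Wset K (n+1), (if m i = 0 then 0 else g m)
      = ∑ m ∈ (Wset K (n+1)).filter (fun m => ¬ m i = 0), g m := by
    rw [Finset.sum_filter]
    refine Finset.sum_congr rfl fun m _ => ?_
    by_cases h : m i = 0 <;> simp [h]
  rw [e0]
  refine Finset.sum_bij' (fun m _ => m - Pi.single i 1) (fun m _ => m + Pi.single i 1)
    ?_ ?_ ?_ ?_ ?_
  · intro m hm
    simp only [Finset.mem_filter, mem_Wset] at hm
    show m - Pi.single i 1 ∈ Wset K n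
    rw [mem_Wset]
    have := wt_sub_single hm.2
    omega
  · intro m hm
    rw [mem_Wset] at hm
    show m + Pi.single i 1 ∈ Finset.filter (fun m => ¬ m i = 0) (Wset K (n+1))
    simp only [Finset.mem_filter, mem_Wset]
    refine ⟨by rw [wt_add, wt_single]; omega, by simp⟩
  · intro m hm
    simp only [Finset.mem_filter, mem_Wset] at hm
    show m - Pi.single i 1 + Pi.single i 1 = m
    exact sub_add_single hm.2
  · intro m hm
    show m + Pi.single i 1 - Pi.single i 1 = m
    exact add_sub_single m i
  · intro m hm
    simp only [Finset.mem_filter, mem_Wset] at hm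
    show g m = g (m - Pi.single i 1 + Pi.single i 1)
    rw [sub_add_single hm.2]

end AuxW

section AuxMultinomial

variable {F : Type*} [Field F] {V : Type*} [AddCommGroup V] [Module F V] {K : ℕ}

lemma multinomial_pow (d : Module.End F V) (u : Fin K → Module.End F V)
    (P : (Fin K → ℕ) → Module.End F V)
    (hdu : ∀ i, Commute d (u i))
    (hP0 : P 0 = 1)
    (hPs : ∀ m i, P (m + Pi.single i 1) = u i * P m) (n : ℕ) :
    (d + ∑ i, u i) ^ n
      = ∑ m ∈ Wset K n, (mnom m (n - wt m) : F) • (d ^ (n - wt m) * P m) := by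
  induction n with
  | zero =>
      rw [Wset_zero, pow_zero, Finset.sum_singleton, hP0]
      simp [mnom_zero]
  | succ n ih =>
      rw [pow_succ', ih, Finset.mul_sum]
      have expand : ∀ m ∈ Wset K n,
          (d + ∑ i, u i) * ((mnom m (n - wt m) : F) • (d ^ (n - wt m) * P m))
            = (mnom m (n - wt m) : F) • (d ^ (n - wt m + 1) * P m)
              + ∑ i, (mnom m (n - wt m) : F)
                  • (d ^ (n - wt m) * P (m + Pi.single i 1)) := by
        intro m _
        rw [add_mul, Finset.sum_mul, mul_smul_comm]
        congr 1
        · rw [← mul_assoc, ← pow_succ']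
        · refine Finset.sum_congr rfl fun i _ => ?_
          rw [mul_smul_comm]
          congr 1
          have hcomm : Commute (u i) (d ^ (n - wt m)) := (hdu i).symm.pow_right _
          rw [← mul_assoc, hcomm.eq, mul_assoc, hPs]
      rw [Finset.sum_congr rfl expand, Finset.sum_add_distrib]
      have target : (∑ m ∈ Wset K (n+1),
            (mnom m (n + 1 - wt m) : F) • (d ^ (n + 1 - wt m) * P m))
         = (∑ m ∈ Wset K (n+1),
              (((if n + 1 - wt m = 0 then 0 else mnom m (n - wt m)) : ℕ) : F)
                • (d ^ (n + 1 - wt m) * P m))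
           + ∑ m ∈ Wset K (n+1), ∑ i,
              (((if m i = 0 then 0 else mnom (m - Pi.single i 1) (n + 1 - wt m)) : ℕ) : F)
                • (d ^ (n + 1 - wt m) * P m) := by
        rw [← Finset.sum_add_distrib]
        refine Finset.sum_congr rfl fun m hm => ?_
        rw [mem_Wset] at hm
        have hp := mnom_pascal m (n + 1 - wt m) (by omega)
        have he : n + 1 - wt m - 1 = n - wt m := by omega
        rw [he] at hp
        rw [← Finset.sum_smul, ← add_smul]
        congr 1
        rw [hp]
        push_cast
        rfl
      rw [target]
      congr 1
      · have hzero : ∀ m ∈ Wset K (n+1), m ∉ Wset K n →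
            (((if n + 1 - wt m = 0 then 0 else mnom m (n - wt m)) : ℕ) : F)
              • (d ^ (n + 1 - wt m) * P m) = 0 := by
          intro m hm hm'
          rw [mem_Wset] at hm hm'
          rw [if_pos (by omega)]
          simp
        rw [← Finset.sum_subset Wset_mono hzero]
        refine Finset.sum_congr rfl fun m hm => ?_
        rw [mem_Wset] at hm
        rw [if_neg (by omega), show n + 1 - wt m = (n - wt m) + 1 from by omega]
      · have key : ∀ i : Fin K,
            (∑ m ∈ Wset K (n+1),
              (((if m i = 0 then 0 else mnom (m - Pi.single i 1) (n + 1 - wt m)) : ℕ) : F)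
                • (d ^ (n + 1 - wt m) * P m))
            = ∑ m ∈ Wset K n,
                (mnom m (n - wt m) : F) • (d ^ (n - wt m) * P (m + Pi.single i 1)) := by
          intro i
          have e1 : (∑ m ∈ Wset K (n+1),
              (((if m i = 0 then 0 else mnom (m - Pi.single i 1) (n + 1 - wt m)) : ℕ) : F)
                • (d ^ (n + 1 - wt m) * P m))
              = ∑ m ∈ Wset K (n+1), (if m i = 0 then 0 else
                  (mnom (m - Pi.single i 1) (n + 1 - wt m) : F)
                    • (d ^ (n + 1 - wt m) * P m)) := by
            refine Finset.sum_congr rfl fun m _ => ?_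
            split_ifs <;> simp
          rw [e1, Wset_sum_shift i]
          refine Finset.sum_congr rfl fun m hm => ?_
          rw [add_sub_single, wt_add, wt_single,
            show n + 1 - (wt m + 1) = n - wt m from by omega]
        trans ∑ i : Fin K, ∑ m ∈ Wset K n,
            (mnom m (n - wt m) : F) • (d ^ (n - wt m) * P (m + Pi.single i 1))
        · exact Finset.sum_comm
        · rw [← Finset.sum_congr rfl fun i _ => key i]
          exact Finset.sum_comm

end AuxMultinomial

section AuxOps

open scoped Classical

variable {F : Type*} [Field F] {M : Type*} [AddCommGroup M] [Module F M] {K : ℕ}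

/-- Upward translation (with scalar) operator on coefficient families. -/
noncomputable def trUp (t : Fin K → ℕ) (c : F) :
    ((Fin K → ℕ) → M) →ₗ[F] ((Fin K → ℕ) → M) where
  toFun φ := fun ρ => c • φ (ρ + t)
  map_add' φ ψ := by
    funext ρ
    show c • (φ + ψ) (ρ + t) = c • φ (ρ + t) + c • ψ (ρ + t)
    rw [Pi.add_apply, smul_add]
  map_smul' r φ := by
    funext ρ
    show c • (r • φ) (ρ + t) = r • (c • φ (ρ + t))
    rw [Pi.smul_apply, smul_comm]

/-- Downward (truncated) translation operator on coefficient families. -/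
noncomputable def trDown (t : Fin K → ℕ) (c : F) :
    ((Fin K → ℕ) → M) →ₗ[F] ((Fin K → ℕ) → M) where
  toFun f := fun ν => if t ≤ ν then c • f (ν - t) else 0
  map_add' f g := by
    funext ν
    show (if t ≤ ν then c • (f + g) (ν - t) else 0)
        = (if t ≤ ν then c • f (ν - t) else 0) + (if t ≤ ν then c • g (ν - t) else 0)
    by_cases h : t ≤ ν
    · rw [if_pos h, if_pos h, if_pos h, Pi.add_apply, smul_add]
    · rw [if_neg h, if_neg h, if_neg h, add_zero]
  map_smul' r f := by
    funext ν
    show (if t ≤ ν then c • (r • f) (ν - t) else 0)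
        = r • (if t ≤ ν then c • f (ν - t) else 0)
    by_cases h : t ≤ ν
    · rw [if_pos h, if_pos h, Pi.smul_apply, smul_comm]
    · rw [if_neg h, if_neg h, smul_zero]

@[simp] lemma trUp_apply (t : Fin K → ℕ) (c : F) (φ : (Fin K → ℕ) → M) (ρ : Fin K → ℕ) :
    trUp t c φ ρ = c • φ (ρ + t) := rfl

lemma trDown_apply (t : Fin K → ℕ) (c : F) (f : (Fin K → ℕ) → M) (ν : Fin K → ℕ) :
    trDown t c f ν = if t ≤ ν then c • f (ν - t) else 0 := rfl

lemma pi_le_iff {t ν : Fin K → ℕ} : t ≤ ν ↔ ∀ i, t i ≤ ν i := Pi.le_def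

lemma trUp_mul (t t' : Fin K → ℕ) (c c' : F) :
    (trUp t c : Module.End F ((Fin K → ℕ) → M)) * trUp t' c' = trUp (t + t') (c * c') := by
  refine LinearMap.ext fun φ => funext fun ρ => ?_
  simp only [Module.End.mul_apply, trUp_apply, add_assoc, mul_smul]

lemma trUp_one : (trUp 0 1 : Module.End F ((Fin K → ℕ) → M)) = 1 := by
  refine LinearMap.ext fun φ => funext fun ρ => ?_
  simp

lemma trDown_mul (t t' : Fin K → ℕ) (c c' : F) :
    (trDown t c : Module.End F ((Fin K → ℕ) → M)) * trDown t' c' = trDown (t + t') (c * c') := by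
  refine LinearMap.ext fun f => funext fun ν => ?_
  simp only [Module.End.mul_apply, trDown_apply]
  by_cases h1 : t ≤ ν
  · by_cases h2 : t' ≤ ν - t
    · have hc : t + t' ≤ ν := by
        intro i
        have e1 := pi_le_iff.mp h1 i
        have e2 := pi_le_iff.mp h2 i
        simp only [Pi.sub_apply, Pi.add_apply] at *
        omega
      have harg : ν - t - t' = ν - (t + t') := by
        funext i
        simp only [Pi.sub_apply, Pi.add_apply]
        omega
      rw [if_pos h1, if_pos h2, if_pos hc, mul_smul, harg]
    · have hc : ¬ t + t' ≤ ν := by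
        intro hc
        apply h2
        intro i
        have e1 := pi_le_iff.mp hc i
        have e2 := pi_le_iff.mp h1 i
        simp only [Pi.sub_apply, Pi.add_apply] at *
        omega
      rw [if_pos h1, if_neg h2, if_neg hc, smul_zero]
  · have hc : ¬ t + t' ≤ ν := by
      intro hc
      apply h1
      intro i
      have e1 := pi_le_iff.mp hc i
      simp only [Pi.add_apply] at *
      omega
    rw [if_neg h1, if_neg hc]

lemma trDown_one : (trDown 0 1 : Module.End F ((Fin K → ℕ) → M)) = 1 := by
  refine LinearMap.ext fun f => funext fun ν => ?_
  show (if (0 : Fin K → ℕ) ≤ ν then (1 : F) • f (ν - 0) else 0) = f ν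
  rw [if_pos (by intro i; simp), one_smul,
    show ν - (0 : Fin K → ℕ) = ν from funext fun i => by simp]

lemma commute_compLeft_trUp (DM : M →ₗ[F] M) (t : Fin K → ℕ) (c : F) :
    Commute (LinearMap.compLeft DM (Fin K → ℕ)) (trUp (M := M) t c) := by
  have : (LinearMap.compLeft DM (Fin K → ℕ)) * (trUp (M := M) t c)
      = (trUp (M := M) t c) * (LinearMap.compLeft DM (Fin K → ℕ)) := by
    refine LinearMap.ext fun φ => funext fun ρ => ?_
    show DM ((trUp t c φ) ρ) = c • ((DM ∘ φ) (ρ + t))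
    rw [trUp_apply, map_smul]
    rfl
  exact this

lemma commute_neg_compLeft_trDown (DM : M →ₗ[F] M) (t : Fin K → ℕ) (c : F) :
    Commute (-LinearMap.compLeft DM (Fin K → ℕ)) (trDown (M := M) t c) := by
  have : (-LinearMap.compLeft DM (Fin K → ℕ)) * (trDown (M := M) t c)
      = (trDown (M := M) t c) * (-LinearMap.compLeft DM (Fin K → ℕ)) := by
    refine LinearMap.ext fun f => funext fun ν => ?_
    show -(DM ((trDown t c f) ν)) = trDown t c (-(DM ∘ f)) ν
    rw [trDown_apply, trDown_apply]
    by_cases h : t ≤ ν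
    · rw [if_pos h, if_pos h, map_smul]
      simp [smul_neg]
    · rw [if_neg h, if_neg h]
      simp
  exact this

lemma compLeft_pow (DM : M →ₗ[F] M) (s : ℕ) :
    (LinearMap.compLeft DM (Fin K → ℕ)) ^ s = LinearMap.compLeft (DM ^ s) (Fin K → ℕ) := by
  induction s with
  | zero =>
      refine LinearMap.ext fun f => funext fun ν => ?_
      rfl
  | succ s ih =>
      rw [pow_succ', pow_succ', ih]
      refine LinearMap.ext fun f => funext fun ν => ?_
      rfl

/-- The operator `∂ - ∑ λᵢ^*` (upward) on "polynomial dual" coefficient families. -/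
noncomputable def Echi (DM : M →ₗ[F] M) (K : ℕ) : Module.End F ((Fin K → ℕ) → M) :=
  LinearMap.compLeft DM (Fin K → ℕ) + ∑ i, trUp (Pi.single i 1) (-1)

/-- The operator of multiplication by `-∑λᵢ - ∂` on coefficient families. -/
noncomputable def Esub (DM : M →ₗ[F] M) (K : ℕ) : Module.End F ((Fin K → ℕ) → M) :=
  -LinearMap.compLeft DM (Fin K → ℕ) + ∑ i, trDown (Pi.single i 1) (-1)

lemma Echi_apply (DM : M →ₗ[F] M) (φ : (Fin K → ℕ) → M) (ρ : Fin K → ℕ) :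
    Echi DM K φ ρ = DM (φ ρ) - ∑ i, φ (ρ + Pi.single i 1) := by
  have e : Echi DM K φ ρ = DM (φ ρ) + ∑ i, (-1 : F) • φ (ρ + Pi.single i 1) := by
    unfold Echi
    rw [LinearMap.add_apply, Pi.add_apply, LinearMap.sum_apply, Finset.sum_apply]
    rfl
  rw [e, sub_eq_add_neg, ← Finset.sum_neg_distrib]
  congr 1
  exact Finset.sum_congr rfl fun i _ => neg_one_smul _ _

lemma Esub_apply (DM : M →ₗ[F] M) (f : (Fin K → ℕ) → M) (ν : Fin K → ℕ) :
    Esub DM K f ν = -DM (f ν)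
      - ∑ i, (if Pi.single i 1 ≤ ν then f (ν - Pi.single i 1) else 0) := by
  have e : Esub DM K f ν = -DM (f ν)
      + ∑ i, (if Pi.single i 1 ≤ ν then (-1 : F) • f (ν - Pi.single i 1) else 0) := by
    unfold Esub
    rw [LinearMap.add_apply, Pi.add_apply, LinearMap.sum_apply, Finset.sum_apply]
    rfl
  rw [e, sub_eq_add_neg, ← Finset.sum_neg_distrib]
  congr 1
  refine Finset.sum_congr rfl fun i _ => ?_
  split_ifs with h
  · exact neg_one_smul _ _
  · simp

lemma Echi_pow_apply (DM : M →ₗ[F] M) (n : ℕ) (φ : (Fin K → ℕ) → M) (ρ : Fin K → ℕ) :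
    ((Echi DM K ^ n) φ) ρ
      = ∑ m ∈ Wset K n,
          ((-1 : F) ^ wt m * (mnom m (n - wt m) : F)) • ((DM ^ (n - wt m)) (φ (ρ + m))) := by
  have hmp := multinomial_pow (LinearMap.compLeft DM (Fin K → ℕ))
    (fun i => trUp (Pi.single i 1) (-1))
    (fun m => trUp m ((-1) ^ wt m))
    (fun i => commute_compLeft_trUp DM _ _)
    (by
      show trUp (0 : Fin K → ℕ) ((-1 : F) ^ wt (0 : Fin K → ℕ)) = 1
      rw [wt_zero, pow_zero]
      exact trUp_one)
    (fun m i => by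
      show trUp (m + Pi.single i 1) ((-1 : F) ^ wt (m + Pi.single i 1)) = _
      rw [trUp_mul, wt_add, wt_single, pow_succ, add_comm (Pi.single i 1) m,
        mul_comm (-1 : F)]) n
  unfold Echi
  rw [hmp]
  rw [LinearMap.sum_apply, Finset.sum_apply]
  refine Finset.sum_congr rfl fun m _ => ?_
  rw [LinearMap.smul_apply, Pi.smul_apply, Module.End.mul_apply, compLeft_pow,
    LinearMap.compLeft_apply]
  show (mnom m (n - wt m) : F) • ((DM ^ (n - wt m)) ((trUp m ((-1 : F) ^ wt m) φ) ρ)) = _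
  rw [trUp_apply, map_smul, smul_smul, mul_comm ((mnom m (n - wt m) : ℕ) : F)]

lemma Esub_pow_apply (DM : M →ₗ[F] M) (n : ℕ) (f : (Fin K → ℕ) → M) (ν : Fin K → ℕ) :
    ((Esub DM K ^ n) f) ν
      = ∑ m ∈ Wset K n,
          ((-1 : F) ^ n * (mnom m (n - wt m) : F))
            • (if m ≤ ν then (DM ^ (n - wt m)) (f (ν - m)) else 0) := by
  have hmp := multinomial_pow (-LinearMap.compLeft DM (Fin K → ℕ))
    (fun i => trDown (Pi.single i 1) (-1))
    (fun m => trDown m ((-1) ^ wt m))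
    (fun i => commute_neg_compLeft_trDown DM _ _)
    (by
      show trDown (0 : Fin K → ℕ) ((-1 : F) ^ wt (0 : Fin K → ℕ)) = 1
      rw [wt_zero, pow_zero]
      exact trDown_one)
    (fun m i => by
      show trDown (m + Pi.single i 1) ((-1 : F) ^ wt (m + Pi.single i 1)) = _
      rw [trDown_mul, wt_add, wt_single, pow_succ, add_comm (Pi.single i 1) m,
        mul_comm (-1 : F)]) n
  unfold Esub
  rw [hmp]
  rw [LinearMap.sum_apply, Finset.sum_apply]
  refine Finset.sum_congr rfl fun m hm => ?_
  rw [mem_Wset] at hm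
  have hneg : (-LinearMap.compLeft DM (Fin K → ℕ)) ^ (n - wt m)
      = (-1 : F) ^ (n - wt m) • (LinearMap.compLeft DM (Fin K → ℕ)) ^ (n - wt m) := by
    rw [← neg_one_smul F (LinearMap.compLeft DM (Fin K → ℕ)), smul_pow]
  rw [LinearMap.smul_apply, Pi.smul_apply, Module.End.mul_apply, hneg, LinearMap.smul_apply,
    Pi.smul_apply, compLeft_pow, LinearMap.compLeft_apply]
  show (mnom m (n - wt m) : F) • ((-1 : F) ^ (n - wt m))
      • ((DM ^ (n - wt m)) ((trDown m ((-1 : F) ^ wt m) f) ν)) = _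
  rw [trDown_apply]
  by_cases h : m ≤ ν
  · rw [if_pos h, if_pos h, map_smul, smul_smul, smul_smul]
    congr 1
    rw [show (-1 : F) ^ n = (-1 : F) ^ (n - wt m) * (-1 : F) ^ wt m from by
      rw [← pow_add]; congr 1; omega]
    ring
  · rw [if_neg h, if_neg h]
    simp

end AuxOps

section AuxFinsum

open Function
open scoped Classical

lemma sum_finsum_comm {ι α V : Type*} [AddCommMonoid V] (s : Finset ι) (f : ι → α → V)
    (hf : ∀ i ∈ s, (support (f i)).Finite) :
    ∑ i ∈ s, ∑ᶠ a, f i a = ∑ᶠ a, ∑ i ∈ s, f i a := by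
  classical
  induction s using Finset.cons_induction with
  | empty => simp
  | cons i s hi ih =>
      rw [Finset.sum_cons, ih (fun j hj => hf j (Finset.mem_cons_of_mem hj))]
      have h2 : (support fun a => ∑ j ∈ s, f j a).Finite := by
        refine Set.Finite.subset
          (Set.Finite.biUnion s.finite_toSet (fun j hj => hf j (Finset.mem_cons_of_mem hj))) ?_
        intro a ha
        rw [mem_support] at ha
        have hex : ∃ j ∈ s, f j a ≠ 0 := by
          by_contra hc
          push_neg at hc
          exact ha (Finset.sum_eq_zero fun j hj => hc j hj)
        obtain ⟨j, hj, hne⟩ := hex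
        exact Set.mem_biUnion hj hne
      rw [← finsum_add_distrib (hf i (Finset.mem_cons_self i s)) h2]
      refine finsum_congr fun a => ?_
      exact (Finset.sum_cons (f := fun j => f j a) hi).symm

lemma finsum_shift_nat {V : Type*} [AddCommMonoid V] (w : ℕ) (G : ℕ → V) :
    ∑ᶠ s, G (w + s) = ∑ᶠ n, if w ≤ n then G n else 0 := by
  classical
  have hinj : Function.Injective (fun s : ℕ => w + s) := fun a b h => by
    have h' : w + a = w + b := h
    omega
  have hset : ∀ n : ℕ, (n ∈ Set.range fun s : ℕ => w + s) ↔ w ≤ n := by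
    intro n
    constructor
    · rintro ⟨s, rfl⟩
      show w ≤ w + s
      omega
    · intro h
      exact ⟨n - w, by show w + (n - w) = n; omega⟩
  calc ∑ᶠ s, G (w + s)
      = ∑ᶠ s, (fun n => if w ≤ n then G n else 0) ((fun s : ℕ => w + s) s) := by
        refine finsum_congr fun s => ?_
        show G (w + s) = if w ≤ w + s then G (w + s) else 0
        rw [if_pos (by omega)]
    _ = ∑ᶠ n ∈ Set.range (fun s : ℕ => w + s), (if w ≤ n then G n else 0) :=
        (finsum_mem_range (f := fun n => if w ≤ n then G n else 0)
          (g := fun s : ℕ => w + s) hinj).symm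
    _ = ∑ᶠ n, if w ≤ n then G n else 0 := by
        rw [finsum_mem_def]
        refine finsum_congr fun n => ?_
        rw [Set.indicator_apply]
        by_cases h : w ≤ n
        · rw [if_pos ((hset n).mpr h)]
        · rw [if_neg (fun hc => h ((hset n).mp hc)), if_neg h]

lemma finsum_shift_pi {V : Type*} [AddCommMonoid V] {K : ℕ} (i : Fin K)
    (G : (Fin K → ℕ) → V) :
    ∑ᶠ ρ, (if Pi.single i 1 ≤ ρ then G (ρ - Pi.single i 1) else 0) = ∑ᶠ σ, G σ := by
  classical
  have hinj : Function.Injective (fun σ : Fin K → ℕ => σ + Pi.single i 1) :=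
    fun a b h => by
      funext r
      have := congrFun h r
      simp only [Pi.add_apply] at this
      omega
  have hset : ∀ ρ : Fin K → ℕ,
      (ρ ∈ Set.range fun σ : Fin K → ℕ => σ + Pi.single i 1) ↔ Pi.single i 1 ≤ ρ := by
    intro ρ
    constructor
    · rintro ⟨σ, rfl⟩
      intro r
      simp only [Pi.add_apply]
      omega
    · intro h
      refine ⟨ρ - Pi.single i 1, ?_⟩
      have hi : ρ i ≠ 0 := by
        have := pi_le_iff.mp h i
        simp only [Pi.single_eq_same] at this
        omega
      exact sub_add_single hi
  calc ∑ᶠ ρ, (if Pi.single i 1 ≤ ρ then G (ρ - Pi.single i 1) else 0)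
      = ∑ᶠ ρ ∈ Set.range (fun σ : Fin K → ℕ => σ + Pi.single i 1),
          (fun ρ => G (ρ - Pi.single i 1)) ρ := by
        rw [finsum_mem_def]
        refine finsum_congr fun ρ => ?_
        rw [Set.indicator_apply]
        by_cases h : Pi.single i 1 ≤ ρ
        · rw [if_pos h, if_pos ((hset ρ).mpr h)]
        · rw [if_neg h, if_neg (fun hc => h ((hset ρ).mp hc))]
    _ = ∑ᶠ σ, G (σ + Pi.single i 1 - Pi.single i 1) :=
        finsum_mem_range (f := fun ρ => G (ρ - Pi.single i 1))
          (g := fun σ : Fin K → ℕ => σ + Pi.single i 1) hinj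
    _ = ∑ᶠ σ, G σ := finsum_congr fun σ => by rw [add_sub_single]

end AuxFinsum

section AuxChiSub

open scoped Classical

variable {F : Type*} [Field F] {M : Type*} [AddCommGroup M] [Module F M] {K : ℕ}

lemma chiMap_eq (DM : M →ₗ[F] M) (φ : (Fin K → ℕ) → M) (ν : Fin (K+1) → ℕ) :
    chiMap DM φ ν = ((Echi DM K ^ (ν (Fin.last K))) φ) (Fin.init ν) := by
  rw [Echi_pow_apply]
  unfold chiMap
  rw [Wset, Finset.sum_filter]
  refine Finset.sum_congr rfl fun m _ => ?_
  by_cases h : wt m ≤ ν (Fin.last K)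
  · rw [if_pos h, if_pos h]
    rfl
  · rw [if_neg h, if_neg h]

lemma chiMap_D (DM : M →ₗ[F] M) (φ : (Fin K → ℕ) → M) (ν : Fin (K+1) → ℕ) :
    DM (chiMap DM φ ν) = ∑ i : Fin (K+1), chiMap DM φ (ν + Pi.single i 1) := by
  rw [chiMap_eq]
  have hstep : DM (((Echi DM K ^ (ν (Fin.last K))) φ) (Fin.init ν))
      = (∑ i : Fin K, ((Echi DM K ^ (ν (Fin.last K))) φ) (Fin.init ν + Pi.single i 1))
        + ((Echi DM K ^ (ν (Fin.last K) + 1)) φ) (Fin.init ν) := by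
    have h' := Echi_apply DM ((Echi DM K ^ (ν (Fin.last K))) φ) (Fin.init ν)
    rw [eq_sub_iff_add_eq] at h'
    rw [← h', pow_succ', Module.End.mul_apply, add_comm]
  rw [hstep, Fin.sum_univ_castSucc]
  congr 1
  · refine Finset.sum_congr rfl fun i _ => ?_
    rw [chiMap_eq]
    have h1 : ((ν + Pi.single (Fin.castSucc i) 1 : Fin (K+1) → ℕ)) (Fin.last K)
        = ν (Fin.last K) := by
      simp only [Pi.add_apply, Pi.single_apply]
      rw [if_neg (Ne.symm (Fin.ne_last_of_lt (Fin.castSucc_lt_last i)))]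
      omega
    have h2 : Fin.init (ν + Pi.single (Fin.castSucc i) 1 : Fin (K+1) → ℕ)
        = Fin.init ν + Pi.single i 1 := by
      funext r
      simp only [Fin.init, Pi.add_apply, Pi.single_apply, Fin.castSucc_inj]
    rw [h1, h2]
  · rw [chiMap_eq]
    have h1 : ((ν + Pi.single (Fin.last K) 1 : Fin (K+1) → ℕ)) (Fin.last K)
        = ν (Fin.last K) + 1 := by
      simp
    have h2 : Fin.init (ν + Pi.single (Fin.last K) 1 : Fin (K+1) → ℕ) = Fin.init ν := by
      funext r
      simp only [Fin.init, Pi.add_apply, Pi.single_apply]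
      rw [if_neg (Fin.ne_last_of_lt (Fin.castSucc_lt_last r))]
      omega
    rw [h1, h2]

lemma pi_sub_sub {ρ ν : Fin K → ℕ} (h : ρ ≤ ν) : ν - (ν - ρ) = ρ := by
  funext i
  have := pi_le_iff.mp h i
  simp only [Pi.sub_apply]
  omega

lemma substDag_eq (DM : M →ₗ[F] M) (q : (Fin K → ℕ) → ℕ → M)
    (hq : ∀ ρ, (Function.support (q ρ)).Finite) (ν : Fin K → ℕ) :
    substDag DM q ν = ∑ᶠ n, ((Esub DM K ^ n) (fun ρ => q ρ n)) ν := by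
  unfold substDag
  have step1 : ∀ ρ, ρ ∈ Finset.Iic ν →
      (∑ᶠ s : ℕ, (((-1 : F)^(wt (fun r => ν r - ρ r) + s))
          * (mnom (fun r => ν r - ρ r) s : F)) • ((DM ^ s) (q ρ (wt (fun r => ν r - ρ r) + s))))
      = ∑ᶠ n, (if wt (fun r => ν r - ρ r) ≤ n then
          (((-1 : F)^n) * (mnom (fun r => ν r - ρ r) (n - wt (fun r => ν r - ρ r)) : F))
            • ((DM ^ (n - wt (fun r => ν r - ρ r))) (q ρ n)) else 0) := by
    intro ρ _
    set w := wt (fun r => ν r - ρ r) with hw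
    rw [← finsum_shift_nat w (fun n => (((-1 : F)^n)
        * (mnom (fun r => ν r - ρ r) (n - w) : F)) • ((DM ^ (n - w)) (q ρ n)))]
    refine finsum_congr fun s => ?_
    show (((-1 : F)^(w + s)) * (mnom (fun r => ν r - ρ r) s : F)) • ((DM ^ s) (q ρ (w + s)))
        = (((-1 : F)^(w + s)) * (mnom (fun r => ν r - ρ r) (w + s - w) : F))
          • ((DM ^ (w + s - w)) (q ρ (w + s)))
    rw [show w + s - w = s from by omega]
  rw [Finset.sum_congr rfl step1]
  have hsupp : ∀ ρ ∈ Finset.Iic ν, (Function.support (fun n =>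
      (if wt (fun r => ν r - ρ r) ≤ n then
          (((-1 : F)^n) * (mnom (fun r => ν r - ρ r) (n - wt (fun r => ν r - ρ r)) : F))
            • ((DM ^ (n - wt (fun r => ν r - ρ r))) (q ρ n)) else 0))).Finite := by
    intro ρ _
    refine Set.Finite.subset (hq ρ) ?_
    intro n hn
    rw [Function.mem_support] at *
    intro h0
    apply hn
    rw [h0]
    split_ifs <;> simp
  rw [sum_finsum_comm _ _ hsupp]
  refine finsum_congr fun n => ?_
  rw [Esub_pow_apply]
  have lhs_filter : ∑ ρ ∈ Finset.Iic ν,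
      (if wt (fun r => ν r - ρ r) ≤ n then
          (((-1 : F)^n) * (mnom (fun r => ν r - ρ r) (n - wt (fun r => ν r - ρ r)) : F))
            • ((DM ^ (n - wt (fun r => ν r - ρ r))) (q ρ n)) else 0)
      = ∑ ρ ∈ (Finset.Iic ν).filter (fun ρ => wt (fun r => ν r - ρ r) ≤ n),
          (((-1 : F)^n) * (mnom (fun r => ν r - ρ r) (n - wt (fun r => ν r - ρ r)) : F))
            • ((DM ^ (n - wt (fun r => ν r - ρ r))) (q ρ n)) :=
    (Finset.sum_filter _ _).symm
  have rhs_filter : ∑ m ∈ Wset K n,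
        ((-1 : F) ^ n * (mnom m (n - wt m) : F))
          • (if m ≤ ν then (DM ^ (n - wt m)) ((fun ρ => q ρ n) (ν - m)) else 0)
      = ∑ m ∈ (Wset K n).filter (fun m => m ≤ ν),
          ((-1 : F) ^ n * (mnom m (n - wt m) : F)) • ((DM ^ (n - wt m)) (q (ν - m) n)) := by
    rw [Finset.sum_filter]
    refine Finset.sum_congr rfl fun m _ => ?_
    by_cases h : m ≤ ν
    · rw [if_pos h, if_pos h]
    · rw [if_neg h, if_neg h, smul_zero]
  rw [lhs_filter, rhs_filter]
  refine Finset.sum_bij' (fun ρ _ => ν - ρ) (fun m _ => ν - m) ?_ ?_ ?_ ?_ ?_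
  · intro ρ hρ
    simp only [Finset.mem_filter, Finset.mem_Iic] at hρ
    show ν - ρ ∈ (Wset K n).filter (fun m => m ≤ ν)
    simp only [Finset.mem_filter, mem_Wset]
    constructor
    · exact le_of_eq_of_le (by rfl) hρ.2
    · intro i
      simp only [Pi.sub_apply]
      omega
  · intro m hm
    simp only [Finset.mem_filter, mem_Wset] at hm
    show ν - m ∈ (Finset.Iic ν).filter (fun ρ => wt (fun r => ν r - ρ r) ≤ n)
    simp only [Finset.mem_filter, Finset.mem_Iic]
    constructor
    · intro i
      simp only [Pi.sub_apply]
      omega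
    · have : (fun r => ν r - (ν - m) r) = m := by
        have := pi_sub_sub hm.2
        exact this
      rw [this]
      exact hm.1
  · intro ρ hρ
    simp only [Finset.mem_filter, Finset.mem_Iic] at hρ
    show ν - (ν - ρ) = ρ
    exact pi_sub_sub hρ.1
  · intro m hm
    simp only [Finset.mem_filter, mem_Wset] at hm
    show ν - (ν - m) = m
    exact pi_sub_sub hm.2
  · intro ρ hρ
    simp only [Finset.mem_filter, Finset.mem_Iic] at hρ
    show _ = ((-1 : F) ^ n * (mnom (ν - ρ) (n - wt (ν - ρ)) : F))
        • ((DM ^ (n - wt (ν - ρ))) (q (ν - (ν - ρ)) n))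
    rw [pi_sub_sub hρ.1]
    rfl

end AuxChiSub

section AuxSupp

open scoped Classical

variable {F : Type*} [Field F] {M : Type*} [AddCommGroup M] [Module F M] {K : ℕ}

lemma pi_sub_add {m ν : Fin K → ℕ} (h : m ≤ ν) : ν - m + m = ν := by
  funext i
  have := pi_le_iff.mp h i
  simp only [Pi.sub_apply, Pi.add_apply]
  omega

lemma support_Esub_pow (DM : M →ₗ[F] M) (n : ℕ) (f : (Fin K → ℕ) → M)
    (hf : (Function.support f).Finite) :
    (Function.support ((Esub DM K ^ n) f)).Finite := by
  refine Set.Finite.subset (Set.Finite.biUnion (Wset K n).finite_toSet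
    (fun m _ => hf.image (fun ν => ν + m))) ?_
  intro ν hν
  rw [Function.mem_support, Esub_pow_apply] at hν
  obtain ⟨m, hm, hne⟩ := Finset.exists_ne_zero_of_sum_ne_zero hν
  have hle : m ≤ ν := by
    by_contra h
    rw [if_neg h, smul_zero] at hne
    exact hne rfl
  have hfne : f (ν - m) ≠ 0 := by
    intro h0
    rw [if_pos hle, h0, map_zero, smul_zero] at hne
    exact hne rfl
  exact Set.mem_biUnion hm ⟨ν - m, hfne, pi_sub_add hle⟩

lemma support_Esub (DM : M →ₗ[F] M) (f : (Fin K → ℕ) → M)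
    (hf : (Function.support f).Finite) :
    (Function.support (Esub DM K f)).Finite := by
  have := support_Esub_pow DM 1 f hf
  rwa [pow_one] at this

end AuxSupp

section AuxPairing

open scoped Classical

variable {F : Type*} [Field F] {M : Type*} [CommRing M] [Algebra F M] {K : ℕ}
variable (DM : M →ₗ[F] M)

lemma pairing_step (hD : ∀ a b : M, DM (a * b) = DM a * b + a * DM b)
    (ψ g : (Fin K → ℕ) → M) (hg : (Function.support g).Finite) :
    ∑ᶠ ρ, ψ ρ * (Esub DM K g) ρ
      = (∑ᶠ ρ, (Echi DM K ψ) ρ * g ρ) - DM (∑ᶠ ρ, ψ ρ * g ρ) := by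
  have hsub : ∀ (h : (Fin K → ℕ) → M),
      (Function.support fun ρ => h ρ * g ρ).Finite := fun h => by
    refine hg.subset ?_
    intro ρ hρ
    rw [Function.mem_support] at *
    intro h0
    exact hρ (by rw [h0, mul_zero])
  have hA : (Function.support fun ρ => ψ ρ * DM (g ρ)).Finite := by
    refine hg.subset ?_
    intro ρ hρ
    rw [Function.mem_support] at *
    intro h0
    exact hρ (by rw [h0, map_zero, mul_zero])
  have hnegA : (Function.support fun ρ => -(ψ ρ * DM (g ρ))).Finite := by
    refine hA.subset ?_
    intro ρ hρ
    rw [Function.mem_support] at *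
    intro h0
    exact hρ (by rw [h0, neg_zero])
  have hB : ∀ i : Fin K, (Function.support fun ρ =>
      (if Pi.single i 1 ≤ ρ then ψ ρ * g (ρ - Pi.single i 1) else 0)).Finite := by
    intro i
    refine (hg.image (fun σ => σ + Pi.single i 1)).subset ?_
    intro ρ hρ
    rw [Function.mem_support] at hρ
    by_cases hle : Pi.single i 1 ≤ ρ
    · rw [if_pos hle] at hρ
      have hgne : g (ρ - Pi.single i 1) ≠ 0 := fun h0 => hρ (by rw [h0, mul_zero])
      exact ⟨ρ - Pi.single i 1, hgne, pi_sub_add hle⟩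
    · rw [if_neg hle] at hρ
      exact absurd rfl hρ
  have hBsum : (Function.support fun ρ =>
      ∑ i, (if Pi.single i 1 ≤ ρ then ψ ρ * g (ρ - Pi.single i 1) else 0)).Finite := by
    refine Set.Finite.subset (Set.Finite.biUnion
      (Finset.univ : Finset (Fin K)).finite_toSet (fun i _ => hB i)) ?_
    intro ρ hρ
    rw [Function.mem_support] at hρ
    obtain ⟨i, _, hne⟩ := Finset.exists_ne_zero_of_sum_ne_zero hρ
    exact Set.mem_biUnion (Finset.mem_univ i) hne
  have e1 : ∀ ρ, ψ ρ * (Esub DM K g) ρ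
      = -(ψ ρ * DM (g ρ))
        - ∑ i, (if Pi.single i 1 ≤ ρ then ψ ρ * g (ρ - Pi.single i 1) else 0) := by
    intro ρ
    rw [Esub_apply, mul_sub, mul_neg, Finset.mul_sum]
    congr 1
    refine Finset.sum_congr rfl fun i _ => ?_
    rw [mul_ite, mul_zero]
  have e2 : (∑ᶠ ρ, ∑ i, (if Pi.single i 1 ≤ ρ then ψ ρ * g (ρ - Pi.single i 1) else 0))
      = ∑ᶠ ρ, (∑ i, ψ (ρ + Pi.single i 1)) * g ρ := by
    rw [← sum_finsum_comm _ _ (fun i _ => hB i)]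
    have e3 : ∀ i : Fin K,
        (∑ᶠ ρ, (if Pi.single i 1 ≤ ρ then ψ ρ * g (ρ - Pi.single i 1) else 0))
        = ∑ᶠ σ, ψ (σ + Pi.single i 1) * g σ := by
      intro i
      refine Eq.trans (finsum_congr fun ρ => ?_)
        (finsum_shift_pi i (fun σ => ψ (σ + Pi.single i 1) * g σ))
      by_cases h : Pi.single i 1 ≤ ρ
      · rw [if_pos h, if_pos h]
        have hi : ρ i ≠ 0 := by
          have := pi_le_iff.mp h i
          simp only [Pi.single_eq_same] at this
          omega
        show ψ ρ * g (ρ - Pi.single i 1)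
            = ψ (ρ - Pi.single i 1 + Pi.single i 1) * g (ρ - Pi.single i 1)
        rw [sub_add_single hi]
      · rw [if_neg h, if_neg h]
    rw [Finset.sum_congr rfl (fun i _ => e3 i)]
    refine Eq.trans (sum_finsum_comm Finset.univ
      (fun (i : Fin K) (σ : Fin K → ℕ) => ψ (σ + Pi.single i 1) * g σ)
      (fun i _ => hsub (fun σ => ψ (σ + Pi.single i 1)))) ?_
    refine finsum_congr fun σ => ?_
    rw [Finset.sum_mul]
  have e4 : (∑ᶠ ρ, (Echi DM K ψ) ρ * g ρ)
      = (∑ᶠ ρ, DM (ψ ρ) * g ρ) - ∑ᶠ ρ, (∑ i, ψ (ρ + Pi.single i 1)) * g ρ := by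
    refine Eq.trans (finsum_congr fun ρ => ?_)
      (finsum_sub_distrib (hsub (fun ρ => DM (ψ ρ)))
        (hsub (fun ρ => ∑ i, ψ (ρ + Pi.single i 1))))
    rw [Echi_apply, sub_mul]
  have e5 : DM (∑ᶠ ρ, ψ ρ * g ρ)
      = (∑ᶠ ρ, DM (ψ ρ) * g ρ) + ∑ᶠ ρ, ψ ρ * DM (g ρ) := by
    calc DM (∑ᶠ ρ, ψ ρ * g ρ) = ∑ᶠ ρ, DM (ψ ρ * g ρ) :=
          DM.toAddMonoidHom.map_finsum (hsub ψ)
      _ = ∑ᶠ ρ, (DM (ψ ρ) * g ρ + ψ ρ * DM (g ρ)) := finsum_congr fun ρ => hD _ _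
      _ = (∑ᶠ ρ, DM (ψ ρ) * g ρ) + ∑ᶠ ρ, ψ ρ * DM (g ρ) :=
          finsum_add_distrib (hsub (fun ρ => DM (ψ ρ))) hA
  rw [finsum_congr e1, finsum_sub_distrib hnegA hBsum, finsum_neg_distrib, e2, e4, e5]
  abel

lemma pairing_pow (hD : ∀ a b : M, DM (a * b) = DM a * b + a * DM b) (n : ℕ) :
    ∀ (ψ g : (Fin K → ℕ) → M), (Function.support g).Finite →
    ∃ w : M, ∑ᶠ ρ, ψ ρ * ((Esub DM K ^ n) g) ρ
      = (∑ᶠ ρ, ((Echi DM K ^ n) ψ) ρ * g ρ) + DM w := by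
  induction n with
  | zero =>
      intro ψ g hg
      refine ⟨0, ?_⟩
      rw [map_zero, add_zero, pow_zero, pow_zero]
      rfl
  | succ n ih =>
      intro ψ g hg
      obtain ⟨w1, hw1⟩ := ih ψ (Esub DM K g) (support_Esub DM g hg)
      have hstep := pairing_step DM hD ((Echi DM K ^ n) ψ) g hg
      refine ⟨w1 - (∑ᶠ ρ, ((Echi DM K ^ n) ψ) ρ * g ρ), ?_⟩
      have hp : (Esub DM K ^ (n+1)) g = (Esub DM K ^ n) (Esub DM K g) := by
        rw [pow_succ, Module.End.mul_apply]
      have hp2 : Echi DM K ((Echi DM K ^ n) ψ) = (Echi DM K ^ (n+1)) ψ := by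
        rw [pow_succ', Module.End.mul_apply]
      rw [hp, hw1, hstep, hp2, map_sub]
      ring

end AuxPairing

section AuxAppend

variable {K r : ℕ}

lemma single_castAdd_castAdd (i j : Fin K) :
    (Pi.single (Fin.castAdd r i) 1 : Fin (K+r) → ℕ) (Fin.castAdd r j)
      = (Pi.single i 1 : Fin K → ℕ) j := by
  simp only [Pi.single_apply, Fin.castAdd_inj]

lemma single_castAdd_natAdd (i : Fin K) (j : Fin r) :
    (Pi.single (Fin.castAdd r i) 1 : Fin (K+r) → ℕ) (Fin.natAdd K j) = 0 := by
  rw [Pi.single_apply, if_neg]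
  intro h
  have := congrArg Fin.val h
  simp only [Fin.coe_natAdd, Fin.coe_castAdd] at this
  have := i.2
  omega

lemma single_natAdd_castAdd (j : Fin r) (i : Fin K) :
    (Pi.single (Fin.natAdd K j) 1 : Fin (K+r) → ℕ) (Fin.castAdd r i) = 0 := by
  rw [Pi.single_apply, if_neg]
  intro h
  have := congrArg Fin.val h
  simp only [Fin.coe_natAdd, Fin.coe_castAdd] at this
  have := i.2
  omega

lemma single_natAdd_natAdd (j j' : Fin r) :
    (Pi.single (Fin.natAdd K j) 1 : Fin (K+r) → ℕ) (Fin.natAdd K j')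
      = (Pi.single j 1 : Fin r → ℕ) j' := by
  by_cases h : j' = j
  · subst h
    simp
  · rw [Pi.single_apply, Pi.single_apply, if_neg h, if_neg]
    intro hc
    apply h
    have := congrArg Fin.val hc
    simp only [Fin.coe_natAdd] at this
    exact Fin.ext (by omega)

lemma append_sub_single_castAdd (i : Fin K) (ρ : Fin K → ℕ) (ν : Fin r → ℕ) :
    Fin.append ρ ν - Pi.single (Fin.castAdd r i) 1
      = Fin.append (ρ - Pi.single i 1) ν := by
  funext j
  refine Fin.addCases (fun j => ?_) (fun j => ?_) j
  · simp only [Pi.sub_apply, Fin.append_left, single_castAdd_castAdd]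
  · simp only [Pi.sub_apply, Fin.append_right, single_castAdd_natAdd, Nat.sub_zero]

lemma append_sub_single_natAdd (j : Fin r) (ρ : Fin K → ℕ) (ν : Fin r → ℕ) :
    Fin.append ρ ν - Pi.single (Fin.natAdd K j) 1
      = Fin.append ρ (ν - Pi.single j 1) := by
  funext i
  refine Fin.addCases (fun i => ?_) (fun i => ?_) i
  · simp only [Pi.sub_apply, Fin.append_left, single_natAdd_castAdd, Nat.sub_zero]
  · simp only [Pi.sub_apply, Fin.append_right, single_natAdd_natAdd]

lemma single_castAdd_le_append (i : Fin K) (ρ : Fin K → ℕ) (ν : Fin r → ℕ) :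
    ((Pi.single (Fin.castAdd r i) 1 : Fin (K+r) → ℕ) ≤ Fin.append ρ ν)
      ↔ Pi.single i 1 ≤ ρ := by
  constructor
  · intro h
    refine pi_le_iff.mpr fun j => ?_
    have := pi_le_iff.mp h (Fin.castAdd r j)
    rwa [single_castAdd_castAdd, Fin.append_left] at this
  · intro h
    refine pi_le_iff.mpr fun j => ?_
    refine Fin.addCases (fun j => ?_) (fun j => ?_) j
    · rw [single_castAdd_castAdd, Fin.append_left]
      exact pi_le_iff.mp h j
    · rw [single_castAdd_natAdd, Fin.append_right]
      exact Nat.zero_le _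

lemma single_natAdd_le_append (j : Fin r) (ρ : Fin K → ℕ) (ν : Fin r → ℕ) :
    ((Pi.single (Fin.natAdd K j) 1 : Fin (K+r) → ℕ) ≤ Fin.append ρ ν)
      ↔ Pi.single j 1 ≤ ν := by
  constructor
  · intro h
    refine pi_le_iff.mpr fun j' => ?_
    have := pi_le_iff.mp h (Fin.natAdd K j')
    rwa [single_natAdd_natAdd, Fin.append_right] at this
  · intro h
    refine pi_le_iff.mpr fun i => ?_
    refine Fin.addCases (fun i => ?_) (fun i => ?_) i
    · rw [single_natAdd_castAdd, Fin.append_left]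
      exact Nat.zero_le _
    · rw [single_natAdd_natAdd, Fin.append_right]
      exact pi_le_iff.mp h i

end AuxAppend

section AuxContr

open scoped Classical

variable {F : Type*} [Field F] {M : Type*} [CommRing M] [Algebra F M]
variable (DM : M →ₗ[F] M)

lemma preimage_append_finite {K r : ℕ} {g : (Fin (K+r) → ℕ) → M}
    (hg : (Function.support g).Finite) (ν' : Fin r → ℕ) :
    ((fun ρ : Fin K → ℕ => Fin.append ρ ν') ⁻¹' (Function.support g)).Finite := by
  refine hg.preimage (Function.Injective.injOn ?_)
  intro a b hab
  funext i
  have h' : Fin.append a ν' (Fin.castAdd r i) = Fin.append b ν' (Fin.castAdd r i) :=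
    congrFun hab (Fin.castAdd r i)
  rwa [Fin.append_left, Fin.append_left] at h'

lemma contr_step {K r : ℕ}
    (hD : ∀ a b : M, DM (a * b) = DM a * b + a * DM b)
    (ψ : (Fin K → ℕ) → M)
    (hψ : ∀ ρ, DM (ψ ρ) = ∑ i, ψ (ρ + Pi.single i 1))
    (g : (Fin (K+r) → ℕ) → M) (hg : (Function.support g).Finite) (ν : Fin r → ℕ) :
    ∑ᶠ ρ : Fin K → ℕ, ψ ρ * (Esub DM (K+r)) g (Fin.append ρ ν)
      = (Esub DM r) (fun ν' => ∑ᶠ ρ : Fin K → ℕ, ψ ρ * g (Fin.append ρ ν')) ν := by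
  have hsub : ∀ (ν' : Fin r → ℕ) (h : (Fin K → ℕ) → M),
      (Function.support fun ρ : Fin K → ℕ => h ρ * g (Fin.append ρ ν')).Finite := by
    intro ν' h
    refine (preimage_append_finite hg ν').subset ?_
    intro ρ hρ
    rw [Function.mem_support] at hρ
    have : g (Fin.append ρ ν') ≠ 0 := fun h0 => hρ (by rw [h0, mul_zero])
    exact this
  -- pointwise expansion of the summand
  have e1 : ∀ ρ : Fin K → ℕ, ψ ρ * (Esub DM (K+r)) g (Fin.append ρ ν)
      = -(ψ ρ * DM (g (Fin.append ρ ν)))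
        - (∑ i : Fin K,
            (if Pi.single i 1 ≤ ρ then ψ ρ * g (Fin.append (ρ - Pi.single i 1) ν) else 0))
        - (∑ j : Fin r,
            (if Pi.single j 1 ≤ ν then ψ ρ * g (Fin.append ρ (ν - Pi.single j 1)) else 0)) := by
    intro ρ
    rw [Esub_apply, Fin.sum_univ_add]
    have hc : ∀ i : Fin K,
        (if (Pi.single (Fin.castAdd r i) 1 : Fin (K+r) → ℕ) ≤ Fin.append ρ ν
          then g (Fin.append ρ ν - Pi.single (Fin.castAdd r i) 1) else 0)
        = (if Pi.single i 1 ≤ ρ then g (Fin.append (ρ - Pi.single i 1) ν) else 0) := by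
      intro i
      rw [append_sub_single_castAdd]
      exact if_congr (single_castAdd_le_append i ρ ν) rfl rfl
    have hn : ∀ j : Fin r,
        (if (Pi.single (Fin.natAdd K j) 1 : Fin (K+r) → ℕ) ≤ Fin.append ρ ν
          then g (Fin.append ρ ν - Pi.single (Fin.natAdd K j) 1) else 0)
        = (if Pi.single j 1 ≤ ν then g (Fin.append ρ (ν - Pi.single j 1)) else 0) := by
      intro j
      rw [append_sub_single_natAdd]
      exact if_congr (single_natAdd_le_append j ρ ν) rfl rfl
    rw [Finset.sum_congr rfl (fun i _ => hc i), Finset.sum_congr rfl (fun j _ => hn j)]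
    rw [mul_sub, mul_neg, mul_add, Finset.mul_sum, Finset.mul_sum]
    rw [Finset.sum_congr rfl (fun i (_ : i ∈ (Finset.univ : Finset (Fin K))) =>
        (mul_ite _ (ψ ρ) _ _).trans (by rw [mul_zero])),
      Finset.sum_congr rfl (fun j (_ : j ∈ (Finset.univ : Finset (Fin r))) =>
        (mul_ite _ (ψ ρ) _ _).trans (by rw [mul_zero])),
      sub_add_eq_sub_sub]
  rw [finsum_congr e1]
  -- support facts
  have h1 : (Function.support fun ρ : Fin K → ℕ =>
      -(ψ ρ * DM (g (Fin.append ρ ν)))).Finite := by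
    refine (preimage_append_finite hg ν).subset ?_
    intro ρ hρ
    rw [Function.mem_support] at hρ
    have : g (Fin.append ρ ν) ≠ 0 := fun h0 => hρ (by rw [h0, map_zero, mul_zero, neg_zero])
    exact this
  have hBi : ∀ i : Fin K, (Function.support fun ρ : Fin K → ℕ =>
      (if Pi.single i 1 ≤ ρ then ψ ρ * g (Fin.append (ρ - Pi.single i 1) ν) else 0)).Finite := by
    intro i
    refine ((preimage_append_finite hg ν).image (fun σ => σ + Pi.single i 1)).subset ?_
    intro ρ hρ
    rw [Function.mem_support] at hρ
    by_cases hle : Pi.single i 1 ≤ ρ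
    · rw [if_pos hle] at hρ
      have hgne : g (Fin.append (ρ - Pi.single i 1) ν) ≠ 0 :=
        fun h0 => hρ (by rw [h0, mul_zero])
      exact ⟨ρ - Pi.single i 1, hgne, pi_sub_add hle⟩
    · rw [if_neg hle] at hρ
      exact absurd rfl hρ
  have h2 : (Function.support fun ρ : Fin K → ℕ =>
      ∑ i : Fin K,
        (if Pi.single i 1 ≤ ρ then ψ ρ * g (Fin.append (ρ - Pi.single i 1) ν) else 0)).Finite := by
    refine Set.Finite.subset (Set.Finite.biUnion
      (Finset.univ : Finset (Fin K)).finite_toSet (fun i _ => hBi i)) ?_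
    intro ρ hρ
    rw [Function.mem_support] at hρ
    obtain ⟨i, _, hne⟩ := Finset.exists_ne_zero_of_sum_ne_zero hρ
    exact Set.mem_biUnion (Finset.mem_univ i) hne
  have hCj : ∀ j : Fin r, (Function.support fun ρ : Fin K → ℕ =>
      (if Pi.single j 1 ≤ ν then ψ ρ * g (Fin.append ρ (ν - Pi.single j 1)) else 0)).Finite := by
    intro j
    by_cases hle : Pi.single j 1 ≤ ν
    · refine (hsub (ν - Pi.single j 1) ψ).subset ?_
      intro ρ hρ
      rw [Function.mem_support] at *
      rwa [if_pos hle] at hρ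
    · refine Set.Finite.subset (Set.finite_empty) ?_
      intro ρ hρ
      rw [Function.mem_support, if_neg hle] at hρ
      exact absurd rfl hρ
  have h3 : (Function.support fun ρ : Fin K → ℕ =>
      ∑ j : Fin r,
        (if Pi.single j 1 ≤ ν then ψ ρ * g (Fin.append ρ (ν - Pi.single j 1)) else 0)).Finite := by
    refine Set.Finite.subset (Set.Finite.biUnion
      (Finset.univ : Finset (Fin r)).finite_toSet (fun j _ => hCj j)) ?_
    intro ρ hρ
    rw [Function.mem_support] at hρ
    obtain ⟨j, _, hne⟩ := Finset.exists_ne_zero_of_sum_ne_zero hρ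
    exact Set.mem_biUnion (Finset.mem_univ j) hne
  have h12 : (Function.support fun ρ : Fin K → ℕ =>
      -(ψ ρ * DM (g (Fin.append ρ ν)))
        - ∑ i : Fin K,
            (if Pi.single i 1 ≤ ρ then ψ ρ * g (Fin.append (ρ - Pi.single i 1) ν) else 0)).Finite := by
    refine Set.Finite.subset (h1.union h2) ?_
    intro ρ hρ
    rw [Function.mem_support] at hρ
    by_contra hc
    simp only [Set.mem_union, Function.mem_support, not_or, not_not] at hc
    exact hρ (by rw [hc.1, hc.2, sub_zero])
  rw [finsum_sub_distrib h12 h3, finsum_sub_distrib h1 h2, finsum_neg_distrib]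
  -- piece B
  have eB : (∑ᶠ ρ : Fin K → ℕ, ∑ i : Fin K,
        (if Pi.single i 1 ≤ ρ then ψ ρ * g (Fin.append (ρ - Pi.single i 1) ν) else 0))
      = ∑ᶠ σ : Fin K → ℕ, DM (ψ σ) * g (Fin.append σ ν) := by
    refine Eq.trans (sum_finsum_comm Finset.univ _ (fun i _ => hBi i)).symm ?_
    have eBi : ∀ i : Fin K,
        (∑ᶠ ρ : Fin K → ℕ,
          (if Pi.single i 1 ≤ ρ then ψ ρ * g (Fin.append (ρ - Pi.single i 1) ν) else 0))
        = ∑ᶠ σ : Fin K → ℕ, ψ (σ + Pi.single i 1) * g (Fin.append σ ν) := by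
      intro i
      refine Eq.trans (finsum_congr fun ρ => ?_)
        (finsum_shift_pi i (fun σ => ψ (σ + Pi.single i 1) * g (Fin.append σ ν)))
      by_cases h : Pi.single i 1 ≤ ρ
      · rw [if_pos h, if_pos h]
        have hi : ρ i ≠ 0 := by
          have := pi_le_iff.mp h i
          simp only [Pi.single_eq_same] at this
          omega
        show ψ ρ * g (Fin.append (ρ - Pi.single i 1) ν)
            = ψ (ρ - Pi.single i 1 + Pi.single i 1) * g (Fin.append (ρ - Pi.single i 1) ν)
        rw [sub_add_single hi]
      · rw [if_neg h, if_neg h]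
    rw [Finset.sum_congr rfl (fun i _ => eBi i)]
    refine Eq.trans (sum_finsum_comm Finset.univ
      (fun (i : Fin K) (σ : Fin K → ℕ) => ψ (σ + Pi.single i 1) * g (Fin.append σ ν))
      (fun i _ => hsub ν (fun σ => ψ (σ + Pi.single i 1)))) ?_
    refine finsum_congr fun σ => ?_
    rw [← Finset.sum_mul, ← hψ σ]
  rw [eB]
  -- piece C
  have eC : (∑ᶠ ρ : Fin K → ℕ, ∑ j : Fin r,
        (if Pi.single j 1 ≤ ν then ψ ρ * g (Fin.append ρ (ν - Pi.single j 1)) else 0))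
      = ∑ j : Fin r, (if Pi.single j 1 ≤ ν
          then (∑ᶠ ρ : Fin K → ℕ, ψ ρ * g (Fin.append ρ (ν - Pi.single j 1))) else 0) := by
    refine Eq.trans (sum_finsum_comm Finset.univ _ (fun j _ => hCj j)).symm ?_
    refine Finset.sum_congr rfl fun j _ => ?_
    by_cases h : Pi.single j 1 ≤ ν
    · rw [if_pos h]
      exact finsum_congr fun ρ => by rw [if_pos h]
    · rw [if_neg h]
      refine Eq.trans (finsum_congr fun ρ => by rw [if_neg h]) finsum_zero
  rw [eC]
  -- right-hand side
  rw [Esub_apply]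
  have eD : DM (∑ᶠ ρ : Fin K → ℕ, ψ ρ * g (Fin.append ρ ν))
      = (∑ᶠ ρ : Fin K → ℕ, DM (ψ ρ) * g (Fin.append ρ ν))
        + ∑ᶠ ρ : Fin K → ℕ, ψ ρ * DM (g (Fin.append ρ ν)) := by
    have hA : (Function.support fun ρ : Fin K → ℕ =>
        ψ ρ * DM (g (Fin.append ρ ν))).Finite := by
      refine (preimage_append_finite hg ν).subset ?_
      intro ρ hρ
      rw [Function.mem_support] at hρ
      have : g (Fin.append ρ ν) ≠ 0 := fun h0 => hρ (by rw [h0, map_zero, mul_zero])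
      exact this
    calc DM (∑ᶠ ρ : Fin K → ℕ, ψ ρ * g (Fin.append ρ ν))
        = ∑ᶠ ρ : Fin K → ℕ, DM (ψ ρ * g (Fin.append ρ ν)) :=
          DM.toAddMonoidHom.map_finsum (hsub ν ψ)
      _ = ∑ᶠ ρ : Fin K → ℕ, (DM (ψ ρ) * g (Fin.append ρ ν) + ψ ρ * DM (g (Fin.append ρ ν))) :=
          finsum_congr fun ρ => hD _ _
      _ = _ := finsum_add_distrib (hsub ν (fun ρ => DM (ψ ρ))) hA
  rw [eD]
  have hnegA' : (∑ᶠ ρ : Fin K → ℕ, -(ψ ρ * DM (g (Fin.append ρ ν))))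
      = -∑ᶠ ρ : Fin K → ℕ, ψ ρ * DM (g (Fin.append ρ ν)) := finsum_neg_distrib _
  abel

lemma contr_pow {K r : ℕ}
    (hD : ∀ a b : M, DM (a * b) = DM a * b + a * DM b)
    (ψ : (Fin K → ℕ) → M)
    (hψ : ∀ ρ, DM (ψ ρ) = ∑ i, ψ (ρ + Pi.single i 1))
    (f : (Fin (K+r) → ℕ) → M) (hf : (Function.support f).Finite) (n : ℕ) :
    (fun ν : Fin r → ℕ =>
        ∑ᶠ ρ : Fin K → ℕ, ψ ρ * ((Esub DM (K+r) ^ n) f) (Fin.append ρ ν))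
      = (Esub DM r ^ n) (fun ν' => ∑ᶠ ρ : Fin K → ℕ, ψ ρ * f (Fin.append ρ ν')) := by
  induction n with
  | zero =>
      funext ν
      rw [pow_zero, pow_zero]
      rfl
  | succ n ih =>
      funext ν
      have hp : (Esub DM (K+r) ^ (n+1)) f = Esub DM (K+r) ((Esub DM (K+r) ^ n) f) := by
        rw [pow_succ', Module.End.mul_apply]
      rw [hp, contr_step DM hD ψ hψ _ (support_Esub_pow DM n f hf) ν, ih]
      have hp2 : (Esub DM r ^ (n+1))
            (fun ν' => ∑ᶠ ρ : Fin K → ℕ, ψ ρ * f (Fin.append ρ ν'))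
          = Esub DM r ((Esub DM r ^ n)
            (fun ν' => ∑ᶠ ρ : Fin K → ℕ, ψ ρ * f (Fin.append ρ ν'))) := by
        rw [pow_succ', Module.End.mul_apply]
      rw [hp2]

end AuxContr

section AuxAssembly

open scoped Classical

variable {F : Type*} [Field F] {M : Type*} [CommRing M] [Algebra F M]

lemma append_nil {n : ℕ} {α : Type*} (u : Fin n → α) :
    Fin.append u (fun i : Fin 0 => i.elim0) = u := by
  rw [show (fun i : Fin 0 => i.elim0) = (Fin.elim0 : Fin 0 → α) from rfl, Fin.append_elim0]
  funext j
  exact congrArg u (Fin.ext rfl)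

lemma finsum_snoc_split {V : Type*} [AddCommMonoid V] {K : ℕ} (X : (Fin (K+1) → ℕ) → V)
    (hX : (Function.support X).Finite) :
    ∑ᶠ ρ' : Fin (K+1) → ℕ, X ρ' = ∑ᶠ μ : Fin K → ℕ, ∑ᶠ n : ℕ, X (Fin.snoc μ n) := by
  classical
  set s1 := hX.toFinset.image (fun ρ' => Fin.init ρ') with hs1
  set s2 := hX.toFinset.image (fun ρ' => ρ' (Fin.last K)) with hs2
  have hinner : ∀ μ : Fin K → ℕ, (Function.support fun n => X (Fin.snoc μ n)) ⊆ ↑s2 := by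
    intro μ n hn
    rw [Function.mem_support] at hn
    refine Finset.mem_coe.mpr (Finset.mem_image.mpr ⟨Fin.snoc μ n, hX.mem_toFinset.mpr hn, ?_⟩)
    rw [Fin.snoc_last]
  have houter : (Function.support fun μ : Fin K → ℕ => ∑ᶠ n, X (Fin.snoc μ n)) ⊆ ↑s1 := by
    intro μ hμ
    rw [Function.mem_support] at hμ
    have hex : ∃ n, X (Fin.snoc μ n) ≠ 0 := by
      by_contra hc
      push_neg at hc
      exact hμ ((finsum_congr hc).trans finsum_zero)
    obtain ⟨n, hn⟩ := hex
    refine Finset.mem_coe.mpr (Finset.mem_image.mpr ⟨Fin.snoc μ n, hX.mem_toFinset.mpr hn, ?_⟩)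
    rw [Fin.init_snoc]
  have hXsub : Function.support X ⊆ ↑((s1 ×ˢ s2).image (fun p : (Fin K → ℕ) × ℕ => (Fin.snoc p.1 p.2 : Fin (K+1) → ℕ))) := by
    intro ρ' hρ'
    have hρ'' := Function.mem_support.mp hρ'
    refine Finset.mem_coe.mpr (Finset.mem_image.mpr
      ⟨(Fin.init ρ', ρ' (Fin.last K)), ?_, Fin.snoc_init_self ρ'⟩)
    exact Finset.mem_product.mpr
      ⟨Finset.mem_image.mpr ⟨ρ', hX.mem_toFinset.mpr hρ'', rfl⟩,
       Finset.mem_image.mpr ⟨ρ', hX.mem_toFinset.mpr hρ'', rfl⟩⟩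
  have hsnoc_inj : ∀ p ∈ s1 ×ˢ s2, ∀ q ∈ s1 ×ˢ s2,
      (fun p : (Fin K → ℕ) × ℕ => (Fin.snoc p.1 p.2 : Fin (K+1) → ℕ)) p
        = (fun p : (Fin K → ℕ) × ℕ => (Fin.snoc p.1 p.2 : Fin (K+1) → ℕ)) q → p = q := by
    intro p _ q _ hpq
    simp only at hpq
    have h1 := congrArg Fin.init hpq
    have h2 := congrArg (fun f : Fin (K+1) → ℕ => f (Fin.last K)) hpq
    rw [Fin.init_snoc, Fin.init_snoc] at h1
    simp only [Fin.snoc_last] at h2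
    exact Prod.ext h1 h2
  calc ∑ᶠ ρ' : Fin (K+1) → ℕ, X ρ'
      = ∑ ρ' ∈ (s1 ×ˢ s2).image (fun p : (Fin K → ℕ) × ℕ => (Fin.snoc p.1 p.2 : Fin (K+1) → ℕ)), X ρ' :=
        finsum_eq_sum_of_support_subset X hXsub
    _ = ∑ p ∈ s1 ×ˢ s2, X (Fin.snoc p.1 p.2) := Finset.sum_image hsnoc_inj
    _ = ∑ μ ∈ s1, ∑ n ∈ s2, X (Fin.snoc μ n) := Finset.sum_product _ _ _
    _ = ∑ μ ∈ s1, ∑ᶠ n, X (Fin.snoc μ n) :=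
        Finset.sum_congr rfl fun μ _ =>
          (finsum_eq_sum_of_support_subset _ (hinner μ)).symm
    _ = ∑ᶠ μ : Fin K → ℕ, ∑ᶠ n, X (Fin.snoc μ n) :=
        (finsum_eq_sum_of_support_subset _ houter).symm

variable (DM : M →ₗ[F] M)

lemma snoc_support_fin {K : ℕ} {γf : (Fin (K+1) → ℕ) → M}
    (hγf : (Function.support γf).Finite) (n : ℕ) :
    (Function.support fun μ : Fin K → ℕ => γf (Fin.snoc μ n)).Finite := by
  have hsub : (Function.support fun μ : Fin K → ℕ => γf (Fin.snoc μ n))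
      ⊆ (fun μ : Fin K → ℕ => (Fin.snoc μ n : Fin (K+1) → ℕ)) ⁻¹' (Function.support γf) :=
    fun μ h => h
  refine Set.Finite.subset (hγf.preimage (Function.Injective.injOn ?_)) hsub
  intro a1 a2 h12
  funext i
  have h' : (Fin.snoc a1 n : Fin (K+1) → ℕ) i.castSucc
      = (Fin.snoc a2 n : Fin (K+1) → ℕ) i.castSucc := congrFun h12 i.castSucc
  rwa [Fin.snoc_castSucc, Fin.snoc_castSucc] at h'

lemma snoc_support_fin' {K : ℕ} {γf : (Fin (K+1) → ℕ) → M}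
    (hγf : (Function.support γf).Finite) (ρ₂ : Fin K → ℕ) :
    (Function.support fun n => γf (Fin.snoc ρ₂ n)).Finite := by
  have hsub : (Function.support fun n => γf (Fin.snoc ρ₂ n))
      ⊆ (fun n : ℕ => (Fin.snoc ρ₂ n : Fin (K+1) → ℕ)) ⁻¹' (Function.support γf) :=
    fun n h => h
  refine Set.Finite.subset (hγf.preimage (Function.Injective.injOn ?_)) hsub
  intro n1 n2 h12
  have h' : (Fin.snoc ρ₂ n1 : Fin (K+1) → ℕ) (Fin.last K)
      = (Fin.snoc ρ₂ n2 : Fin (K+1) → ℕ) (Fin.last K) := congrFun h12 _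
  rwa [Fin.snoc_last, Fin.snoc_last] at h'

/-- Part 1 of Statement 16, abstract form. -/
lemma partA {K r : ℕ}
    (hD : ∀ a b : M, DM (a * b) = DM a * b + a * DM b)
    (ψ : (Fin K → ℕ) → M)
    (hψ : ∀ ρ, DM (ψ ρ) = ∑ i, ψ (ρ + Pi.single i 1))
    (γf : (Fin ((K + r) + 1) → ℕ) → M) (hγf : (Function.support γf).Finite)
    (ν : Fin r → ℕ) :
    (∑ᶠ ρ : Fin K → ℕ, ψ ρ * substDag DM (fun ρ₂ n => γf (Fin.snoc ρ₂ n)) (Fin.append ρ ν))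
      = substDag DM
          (fun (ρ' : Fin r → ℕ) n =>
            ∑ᶠ ρ : Fin K → ℕ, ψ ρ * γf (Fin.append (n := r+1) ρ (Fin.snoc ρ' n))) ν := by
  obtain ⟨N, hbound⟩ : ∃ N : ℕ, ∀ μ, γf μ ≠ 0 → μ (Fin.last (K+r)) ≤ N :=
    ⟨(hγf.toFinset.image fun μ => μ (Fin.last (K+r))).sup id,
     fun μ hμ => Finset.le_sup (f := id)
       (Finset.mem_image.mpr ⟨μ, hγf.mem_toFinset.mpr hμ, rfl⟩)⟩
  have hΓzero : ∀ n, N < n → (fun μ : Fin (K+r) → ℕ => γf (Fin.snoc μ n)) = 0 := by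
    intro n hn
    funext μ
    show γf (Fin.snoc μ n) = 0
    by_contra hne
    have h' := hbound _ hne
    rw [Fin.snoc_last] at h'
    omega
  have hΓfin : ∀ n, (Function.support fun μ : Fin (K+r) → ℕ => γf (Fin.snoc μ n)).Finite :=
    fun n => snoc_support_fin hγf n
  have hsupp : ∀ (h : (Fin (K+r) → ℕ) → M), (Function.support h).Finite →
      ∀ ν' : Fin r → ℕ,
      (Function.support fun ρ : Fin K → ℕ => ψ ρ * h (Fin.append ρ ν')).Finite := by
    intro h hh ν'
    refine (preimage_append_finite hh ν').subset ?_
    intro ρ hρ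
    rw [Function.mem_support] at hρ
    exact fun h0 => hρ (by rw [h0, mul_zero])
  have step1 : (∑ᶠ ρ : Fin K → ℕ,
        ψ ρ * substDag DM (fun ρ₂ n => γf (Fin.snoc ρ₂ n)) (Fin.append ρ ν))
      = ∑ᶠ ρ : Fin K → ℕ, ψ ρ * ∑ n ∈ Finset.range (N+1),
          ((Esub DM (K+r) ^ n) (fun μ => γf (Fin.snoc μ n))) (Fin.append ρ ν) := by
    refine finsum_congr fun ρ => ?_
    congr 1
    refine (substDag_eq DM _ (snoc_support_fin' hγf) _).trans ?_
    refine finsum_eq_sum_of_support_subset _ ?_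
    intro n hn
    rw [Function.mem_support] at hn
    rw [Finset.coe_range, Set.mem_Iio]
    by_contra hc
    push_neg at hc
    apply hn
    show ((Esub DM (K+r) ^ n) (fun μ => γf (Fin.snoc μ n))) (Fin.append ρ ν) = 0
    rw [hΓzero n (by omega), map_zero]
    rfl
  have step2 : (∑ᶠ ρ : Fin K → ℕ, ψ ρ * ∑ n ∈ Finset.range (N+1),
        ((Esub DM (K+r) ^ n) (fun μ => γf (Fin.snoc μ n))) (Fin.append ρ ν))
      = ∑ n ∈ Finset.range (N+1), ∑ᶠ ρ : Fin K → ℕ,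
          ψ ρ * ((Esub DM (K+r) ^ n) (fun μ => γf (Fin.snoc μ n))) (Fin.append ρ ν) := by
    refine Eq.trans (finsum_congr fun ρ => Finset.mul_sum _ _ _) ?_
    exact (sum_finsum_comm _ _
      (fun n _ => hsupp _ (support_Esub_pow DM n _ (hΓfin n)) ν)).symm
  have step3 : ∀ n : ℕ,
      (∑ᶠ ρ : Fin K → ℕ,
        ψ ρ * ((Esub DM (K+r) ^ n) (fun μ => γf (Fin.snoc μ n))) (Fin.append ρ ν))
      = ((Esub DM r ^ n)
          (fun ν' => ∑ᶠ ρ : Fin K → ℕ, ψ ρ * γf (Fin.snoc (Fin.append ρ ν') n))) ν := by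
    intro n
    exact congrFun (contr_pow DM hD ψ hψ (fun μ => γf (Fin.snoc μ n)) (hΓfin n) n) ν
  have step4 : substDag DM
        (fun (ρ' : Fin r → ℕ) n =>
          ∑ᶠ ρ : Fin K → ℕ, ψ ρ * γf (Fin.append (n := r+1) ρ (Fin.snoc ρ' n))) ν
      = ∑ n ∈ Finset.range (N+1),
          ((Esub DM r ^ n)
            (fun ν' => ∑ᶠ ρ : Fin K → ℕ, ψ ρ * γf (Fin.snoc (Fin.append ρ ν') n))) ν := by
    have hz : ∀ n, N < n → ∀ ν' : Fin r → ℕ,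
        (∑ᶠ ρ : Fin K → ℕ, ψ ρ * γf (Fin.append (n := r+1) ρ (Fin.snoc ν' n))) = 0 := by
      intro n hn ν'
      have h0 : ∀ ρ : Fin K → ℕ, ψ ρ * γf (Fin.append (n := r+1) ρ (Fin.snoc ν' n)) = 0 := by
        intro ρ
        rw [Fin.append_snoc]
        have h1 : γf (Fin.snoc (Fin.append ρ ν') n) = 0 := by
          by_contra hne
          have h' := hbound _ hne
          rw [Fin.snoc_last] at h'
          omega
        rw [h1, mul_zero]
      exact (finsum_congr h0).trans finsum_zero
    have hq2 : ∀ ρ' : Fin r → ℕ, (Function.support fun n =>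
        ∑ᶠ ρ : Fin K → ℕ, ψ ρ * γf (Fin.append (n := r+1) ρ (Fin.snoc ρ' n))).Finite := by
      intro ρ'
      refine (Set.finite_Iic N).subset ?_
      intro n hn
      rw [Function.mem_support] at hn
      rw [Set.mem_Iic]
      by_contra hc
      push_neg at hc
      exact hn (hz n hc ρ')
    refine (substDag_eq DM _ hq2 ν).trans ?_
    refine (finsum_eq_sum_of_support_subset (s := Finset.range (N+1)) _ ?_).trans ?_
    · intro n hn
      rw [Function.mem_support] at hn
      rw [Finset.coe_range, Set.mem_Iio]
      by_contra hc
      push_neg at hc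
      apply hn
      show ((Esub DM r ^ n)
        (fun ρ' => ∑ᶠ ρ : Fin K → ℕ, ψ ρ * γf (Fin.append (n := r+1) ρ (Fin.snoc ρ' n)))) ν = 0
      rw [show (fun ρ' : Fin r → ℕ =>
          ∑ᶠ ρ : Fin K → ℕ, ψ ρ * γf (Fin.append (n := r+1) ρ (Fin.snoc ρ' n))) = 0 from
        funext fun ρ' => hz n (by omega) ρ', map_zero]
      rfl
    · refine Finset.sum_congr rfl fun n _ => ?_
      show ((Esub DM r ^ n)
        (fun ρ' => ∑ᶠ ρ : Fin K → ℕ, ψ ρ * γf (Fin.append (n := r+1) ρ (Fin.snoc ρ' n)))) ν = _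
      refine congrFun (congrArg (Esub DM r ^ n) (funext fun ν' => ?_)) ν
      refine finsum_congr fun ρ => ?_
      rw [Fin.append_snoc]
  exact step1.trans (step2.trans
    ((Finset.sum_congr rfl (fun n _ => step3 n)).trans step4.symm))

/-- Part 2 of Statement 16, abstract form. -/
lemma partB {K : ℕ}
    (hD : ∀ a b : M, DM (a * b) = DM a * b + a * DM b)
    (φ : (Fin K → ℕ) → M)
    (γf : (Fin (K+1) → ℕ) → M) (hγf : (Function.support γf).Finite) :
    ∃ w : M,
      (∑ᶠ ρ : Fin K → ℕ, φ ρ * substDag DM (fun ρ₂ n => γf (Fin.snoc ρ₂ n)) ρ)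
        - (∑ᶠ ρ' : Fin (K+1) → ℕ, chiMap DM φ ρ' * γf ρ') = DM w := by
  obtain ⟨N, hbound⟩ : ∃ N : ℕ, ∀ μ, γf μ ≠ 0 → μ (Fin.last K) ≤ N :=
    ⟨(hγf.toFinset.image fun μ => μ (Fin.last K)).sup id,
     fun μ hμ => Finset.le_sup (f := id)
       (Finset.mem_image.mpr ⟨μ, hγf.mem_toFinset.mpr hμ, rfl⟩)⟩
  have hΓzero : ∀ n, N < n → (fun μ : Fin K → ℕ => γf (Fin.snoc μ n)) = 0 := by
    intro n hn
    funext μ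
    show γf (Fin.snoc μ n) = 0
    by_contra hne
    have h' := hbound _ hne
    rw [Fin.snoc_last] at h'
    omega
  have hΓfin : ∀ n, (Function.support fun μ : Fin K → ℕ => γf (Fin.snoc μ n)).Finite :=
    fun n => snoc_support_fin hγf n
  have hsupp : ∀ (h : (Fin K → ℕ) → M), (Function.support h).Finite →
      (Function.support fun ρ : Fin K → ℕ => φ ρ * h ρ).Finite := by
    intro h hh
    refine hh.subset ?_
    intro ρ hρ
    rw [Function.mem_support] at *
    exact fun h0 => hρ (by rw [h0, mul_zero])
  -- left-hand side
  have step1a : (∑ᶠ ρ : Fin K → ℕ, φ ρ * substDag DM (fun ρ₂ n => γf (Fin.snoc ρ₂ n)) ρ)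
      = ∑ᶠ ρ : Fin K → ℕ, φ ρ * ∑ n ∈ Finset.range (N+1),
          ((Esub DM K ^ n) (fun μ => γf (Fin.snoc μ n))) ρ := by
    refine finsum_congr fun ρ => ?_
    congr 1
    refine (substDag_eq DM _ (snoc_support_fin' hγf) _).trans ?_
    refine finsum_eq_sum_of_support_subset _ ?_
    intro n hn
    rw [Function.mem_support] at hn
    rw [Finset.coe_range, Set.mem_Iio]
    by_contra hc
    push_neg at hc
    apply hn
    show ((Esub DM K ^ n) (fun μ => γf (Fin.snoc μ n))) ρ = 0
    rw [hΓzero n (by omega), map_zero]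
    rfl
  have step1 : (∑ᶠ ρ : Fin K → ℕ, φ ρ * substDag DM (fun ρ₂ n => γf (Fin.snoc ρ₂ n)) ρ)
      = ∑ n ∈ Finset.range (N+1), ∑ᶠ ρ : Fin K → ℕ,
          φ ρ * ((Esub DM K ^ n) (fun μ => γf (Fin.snoc μ n))) ρ := by
    refine (step1a.trans (finsum_congr fun ρ => Finset.mul_sum _ _ _)).trans ?_
    exact (sum_finsum_comm _ _
      (fun n _ => hsupp _ (support_Esub_pow DM n _ (hΓfin n)))).symm
  have hterm : ∀ n : ℕ, ∃ w : M,
      (∑ᶠ ρ : Fin K → ℕ, φ ρ * ((Esub DM K ^ n) (fun μ => γf (Fin.snoc μ n))) ρ)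
      = (∑ᶠ ρ : Fin K → ℕ, ((Echi DM K ^ n) φ) ρ * γf (Fin.snoc ρ n)) + DM w := by
    intro n
    obtain ⟨w, hw⟩ := pairing_pow DM hD n φ (fun μ => γf (Fin.snoc μ n)) (hΓfin n)
    exact ⟨w, hw⟩
  choose wfun hwfun using hterm
  -- right-hand side
  have hXfin : (Function.support fun ρ' : Fin (K+1) → ℕ => chiMap DM φ ρ' * γf ρ').Finite := by
    refine hγf.subset ?_
    intro ρ' hρ'
    rw [Function.mem_support] at *
    exact fun h0 => hρ' (by rw [h0, mul_zero])
  have hchi : ∀ (μ : Fin K → ℕ) (n : ℕ),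
      chiMap DM φ (Fin.snoc μ n) = ((Echi DM K ^ n) φ) μ := by
    intro μ n
    rw [chiMap_eq, Fin.snoc_last, Fin.init_snoc]
  have step2b : ∀ μ : Fin K → ℕ,
      (∑ᶠ n : ℕ, chiMap DM φ (Fin.snoc μ n) * γf (Fin.snoc μ n))
      = ∑ n ∈ Finset.range (N+1), ((Echi DM K ^ n) φ) μ * γf (Fin.snoc μ n) := by
    intro μ
    have h1 : ∀ n : ℕ, chiMap DM φ (Fin.snoc μ n) * γf (Fin.snoc μ n)
        = ((Echi DM K ^ n) φ) μ * γf (Fin.snoc μ n) := fun n => by rw [hchi]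
    refine (finsum_congr h1).trans ?_
    refine finsum_eq_sum_of_support_subset
      (fun n => ((Echi DM K ^ n) φ) μ * γf (Fin.snoc μ n)) ?_
    intro n hn
    rw [Function.mem_support] at hn
    rw [Finset.coe_range, Set.mem_Iio]
    by_contra hc
    push_neg at hc
    apply hn
    have h2 : γf (Fin.snoc μ n) = 0 := by
      by_contra hne
      have h' := hbound _ hne
      rw [Fin.snoc_last] at h'
      omega
    rw [h2, mul_zero]
  have step2 : (∑ᶠ ρ' : Fin (K+1) → ℕ, chiMap DM φ ρ' * γf ρ')
      = ∑ n ∈ Finset.range (N+1), ∑ᶠ ρ : Fin K → ℕ,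
          ((Echi DM K ^ n) φ) ρ * γf (Fin.snoc ρ n) := by
    refine ((finsum_snoc_split _ hXfin).trans (finsum_congr step2b)).trans ?_
    refine (sum_finsum_comm _ _ (fun n _ => ?_)).symm
    refine (hΓfin n).subset ?_
    intro μ hμ
    rw [Function.mem_support] at *
    exact fun h0 => hμ (by rw [h0, mul_zero])
  refine ⟨∑ n ∈ Finset.range (N+1), wfun n, ?_⟩
  rw [step1, step2, map_sum, ← Finset.sum_sub_distrib]
  refine Finset.sum_congr rfl fun n _ => ?_
  rw [hwfun n]
  ring

end AuxAssembly

end LCC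

open LCC in
/-- **Statement 16.** Let `A` be a Lie conformal algebra and `M` an `A`-module with a
commutative associative product on which `∂^M` and all `a_λ` act by derivations.
For every `x = b ⊗ φ ∈ C_h(A,M)` and every `γ ∈ Γ^k(A,M)` with `k ≥ h`, one has
`ι_x (ψ^k γ) = ψ^{k−h}(ι_{χ_h(x)} γ)`: the contractions on `C^•` and `Γ^•` are
compatible via `ψ` and `χ` (the case `h = k` being an equality in `C⁰ = M/∂^M M`,
i.e. up to an element of `∂^M M`). -/
theorem contraction_compatible_with_psi_chi
    {F : Type*} [Field F] [CharZero F]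
    {A M : Type*} [AddCommGroup A] [Module F A] [CommRing M] [Algebra F M]
    (L : LCA F A) (R : LCAMod F L M)
    (hD : ∀ m n : M, R.D (m * n) = R.D m * n + m * R.D n)
    (hact : ∀ (a : A) (m n : M) (p : ℕ),
      R.act a (m * n) p = R.act a m p * n + m * R.act a n p) :
    -- the case h < k
    (∀ (h' r : ℕ) (b : Fin (h'+1) → A) (φ : (Fin h' → ℕ) → M)
        (γ : (Fin ((h'+1)+(r+1)) → A) → (Fin ((h'+1)+(r+1)) → ℕ) → M),
      IsGamma R ((h'+1)+(r+1)) γ →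
        iotaC R b φ (psiRaw (k := (h'+1)+r) R γ)
          = psiRaw (k := r) R (iotaG (h := h'+1) (k := r+1) b (chiMap R.D φ) γ)) ∧
    -- the case h = k : equality in C⁰ = M/∂^M M
    (∀ (h' : ℕ) (b : Fin (h'+1) → A) (φ : (Fin h' → ℕ) → M)
        (γ : (Fin (h'+1) → A) → (Fin (h'+1) → ℕ) → M),
      IsGamma R (h'+1) γ →
        ∃ w : M,
          iotaCTop R b φ (psiRaw (k := h') R γ)
            - iotaG (h := h'+1) (k := 0) b (chiMap R.D φ) γ
                (fun i => i.elim0) (fun i => i.elim0)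
          = R.D w) := by
  constructor
  · intro h' r b φ γ hγ
    funext a ν
    exact partA R.D hD (chiMap R.D φ) (fun ρ => chiMap_D R.D φ ρ)
      (γ (Fin.append b a)) (hγ.fin _) ν
  · intro h' b φ γ hγ
    obtain ⟨w, hw⟩ := partB R.D hD φ (γ b) (hγ.fin b)
    refine ⟨w, ?_⟩
    have hreq : iotaG (h := h'+1) (k := 0) b (chiMap R.D φ) γ
          (fun i => i.elim0) (fun i => i.elim0)
        = ∑ᶠ ρ' : Fin (h'+1) → ℕ, chiMap R.D φ ρ' * γ b ρ' := by
      refine finsum_congr fun ρ' => ?_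
      rw [append_nil, append_nil]
    rw [hreq]
    exact hw
end
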